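/- arXiv:1608.01873 — 15 statements merged into one kernel-verified Lean document; each statement's English description precedes it below -/
import Mathlib

section
/- Let p > 3 be a prime such that for every natural number r the congruence 2^r ≡ −1 (mod p) fails. Then for n = p + 2 the chromatic number of G(n, 3, 2) satisfies χ(G(n, 3, 2)) ≤ n − 2. -/
/-- The graph `G(n, r, s)`: vertices are the `r`-element subsets of `{0, 1, ..., n-1}`,
two of them adjacent iff their intersection has exactly `s` elements. -/
def distGraph (n r s : ℕ) : SimpleGraph {A : Finset (Fin n) // A.card = r} where
  Adj A B := A ≠ B ∧ (A.1 ∩ B.1).card = s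
  symm := by
    constructor
    intro A B h
    exact ⟨h.1.symm, by rw [Finset.inter_comm]; exact h.2⟩
  loopless := by
    constructor
    intro A h
    exact h.1 rfl

/-!
Identify `{0, …, p + 1}` with `ZMod p ⊕ Bool`. Since `-1` is not a power of `2`, the orbits of
multiplication by `2` on `ZMod p \ {0}` come in distinct pairs `O, -O`; choosing one orbit from each
pair gives a set `S`, closed under doubling, containing exactly one of `x`, `-x` for every `x ≠ 0`.
Say `c` beats `d` when `c - d ∈ S`. Colour a triple `{c, d, e}` of residues by `c + d + e`,
`{inr true, c, d}` by `c + d + (winner of c, d)`, `{inr false, c, d}` by `c + d + (loser)`, and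
`{inr true, inr false, c}` by `3 c`. Adjacent triples are `{x, a, b}`, `{y, a, b}` with `x ≠ y`.
If `a, b` are residues, the colours differ because the third point, the winner and the loser of
`a, b` are distinct. If `{a, b} = {inr true, d}`, the colour minus `3 d` is `0` for
`x = inr false`, and for `x = c` it is `2 t` or `t` (with `t = c - d`) according as `t ∈ S` or not;
this is injective in `t` because `S` is closed under doubling. The case `inr false` is the same
with `-S` in place of `S`.
-/

open Finset Function Sum

@[simp]
lemma Finset.toLeft_singleton_inl {α β : Type*} (a : α) :
    ({inl a} : Finset (α ⊕ β)).toLeft = {a} := by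
  ext; simp

@[simp]
lemma Finset.toRight_singleton_inl {α β : Type*} (a : α) :
    ({inl a} : Finset (α ⊕ β)).toRight = ∅ := by
  ext; simp

@[simp]
lemma Finset.toLeft_singleton_inr {α β : Type*} (b : β) :
    ({inr b} : Finset (α ⊕ β)).toLeft = ∅ := by
  ext; simp

@[simp]
lemma Finset.toRight_singleton_inr {α β : Type*} (b : β) :
    ({inr b} : Finset (α ⊕ β)).toRight = {b} := by
  ext; simp

theorem Finset.exists_eq_insert_inter_of_card_inter {α : Type*} [DecidableEq α]
    {A B : Finset α} {k : ℕ} (hA : #A = k + 1) (hB : #B = k + 1) (hAB : #(A ∩ B) = k) :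
    ∃ x y, x ≠ y ∧ x ∉ A ∩ B ∧ y ∉ A ∩ B ∧ insert x (A ∩ B) = A ∧ insert y (A ∩ B) = B := by
  obtain ⟨x, hx, hxA⟩ := exists_eq_insert_iff.2 ⟨inter_subset_left, by rw [hAB, hA]⟩
  obtain ⟨y, hy, hyB⟩ := exists_eq_insert_iff.2 ⟨inter_subset_right, by rw [hAB, hB]⟩
  refine ⟨x, y, ?_, hx, hy, hxA, hyB⟩
  rintro rfl
  exact hx (mem_inter.2 ⟨hxA ▸ mem_insert_self x _, hyB ▸ mem_insert_self x _⟩)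

section Tournament

variable {F : Type*} [Field F]

/-- `c` beats `d` iff `c - d ∈ S` defines a tournament on `F`. -/
def IsTournamentSet (S : Set F) : Prop := ∀ x ≠ 0, x ∈ S ↔ -x ∉ S

theorem exists_isTournamentSet_mul_mem (t : Fˣ) (ht : -1 ∉ Subgroup.zpowers t) :
    ∃ S : Set F, IsTournamentSet S ∧ ∀ x ∈ S, (t : F) * x ∈ S := by
  let orb : F → Set F := fun x ↦ MulAction.orbit (Subgroup.zpowers t) x
  have orb_mul (x : F) : orb (t * x) = orb x :=
    MulAction.orbit_smul (⟨t, Subgroup.mem_zpowers t⟩ : Subgroup.zpowers t) x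
  have orb_ne {x : F} (hx : x ≠ 0) : orb x ≠ orb (-x) := by
    intro h
    obtain ⟨⟨g, hg⟩, hgx⟩ := MulAction.orbit_eq_iff.1 h
    have hgx : (g : F) * -x = x := hgx
    have : g = -1 := Units.ext (mul_right_cancel₀ (neg_ne_zero.2 hx) (by simpa using hgx))
    exact ht (this ▸ hg)
  -- A well-order on orbits picks, from the two distinct orbits of `x` and `-x`, the smaller one.
  refine ⟨{x | WellOrderingRel (orb x) (orb (-x))}, fun x hx ↦ ?_, fun x hx ↦ ?_⟩
  · simp only [Set.mem_ofPred_eq, neg_neg]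
    exact ⟨asymm, fun h ↦ (trichotomous_of WellOrderingRel _ _).resolve_right
      (not_or.2 ⟨orb_ne hx, h⟩)⟩
  · simpa [orb_mul, ← mul_neg] using hx

namespace IsTournamentSet

variable {S : Set F}

lemma neg (hS : IsTournamentSet S) : IsTournamentSet (-S) := fun x hx ↦ by
  simpa using hS (-x) (neg_ne_zero.2 hx)

lemma sub_mem_iff (hS : IsTournamentSet S) {c d : F} (hcd : c ≠ d) :
    d - c ∈ S ↔ c - d ∉ S := by
  rw [hS (c - d) (sub_ne_zero.2 hcd), neg_sub, not_not]

end IsTournamentSet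

def orient (S : Set F) (b : Bool) : Set F := if b then S else -S

lemma isTournamentSet_orient {S : Set F} (hS : IsTournamentSet S) (b : Bool) :
    IsTournamentSet (orient S b) := by
  cases b
  · exact hS.neg
  · exact hS

lemma orient_two_mul_mem {S : Set F} (hS2 : ∀ x ∈ S, 2 * x ∈ S) (b : Bool) :
    ∀ x ∈ orient S b, 2 * x ∈ orient S b := by
  cases b
  · intro x hx
    simpa [orient] using hS2 (-x) hx
  · exact hS2

open Classical in
noncomputable def winnerSum (S : Set F) (T : Finset F) : F :=
  ∑ c ∈ T with ∀ d ∈ T, d ≠ c → c - d ∈ S, c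

lemma winnerSum_singleton (S : Set F) (c : F) : winnerSum S {c} = c := by
  simp [winnerSum, filter_singleton]

open Classical in
noncomputable def doubleOn (S : Set F) (t : F) : F := if t ∈ S then 2 * t else t

lemma doubleOn_zero (S : Set F) : doubleOn S 0 = 0 := by
  simp [doubleOn]

lemma doubleOn_injective {S : Set F} (hS2 : ∀ x ∈ S, 2 * x ∈ S) (h2 : (2 : F) ≠ 0) :
    Injective (doubleOn S) := by
  intro s t hst
  unfold doubleOn at hst
  split_ifs at hst with hs ht ht
  · exact mul_left_cancel₀ h2 hst
  · exact absurd (hst ▸ hS2 s hs) ht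
  · exact absurd (hst ▸ hS2 t ht) hs
  · exact hst

variable [DecidableEq F]

open Classical in
lemma IsTournamentSet.winnerSum_pair {S : Set F} (hS : IsTournamentSet S) {c d : F}
    (hcd : c ≠ d) : winnerSum S {c, d} = if c - d ∈ S then c else d := by
  by_cases h : c - d ∈ S <;>
    simp [winnerSum, filter_insert, filter_singleton, hcd, hcd.symm, h, hS.sub_mem_iff hcd]

lemma IsTournamentSet.winnerSum_pair_mem {S : Set F} (hS : IsTournamentSet S) {c d : F}
    (hcd : c ≠ d) : winnerSum S {c, d} = c ∨ winnerSum S {c, d} = d := by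
  rw [hS.winnerSum_pair hcd]
  split_ifs <;> simp

lemma IsTournamentSet.add_add_winnerSum_pair {S : Set F} (hS : IsTournamentSet S) {c d : F}
    (hcd : c ≠ d) : c + d + winnerSum S {c, d} = 3 * d + doubleOn S (c - d) := by
  rw [hS.winnerSum_pair hcd, doubleOn]
  split_ifs <;> ring

lemma winnerSum_orient_ne {S : Set F} (hS : IsTournamentSet S) {c d : F} (hcd : c ≠ d)
    {b b' : Bool} (hb : b ≠ b') :
    winnerSum (orient S b) {c, d} ≠ winnerSum (orient S b') {c, d} := by
  have winner_ne_loser : winnerSum S {c, d} ≠ winnerSum (-S) {c, d} := by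
    rw [hS.winnerSum_pair hcd, hS.neg.winnerSum_pair hcd]
    by_cases h : c - d ∈ S <;> simp [h, hcd, hcd.symm, hS.sub_mem_iff hcd]
  cases b <;> cases b' <;> simp_all [orient, Ne.symm]

end Tournament

section Coloring

variable {F : Type*} [Field F] [DecidableEq F] {S : Set F}

/-- The point `inr true` contributes the winner among the field elements of `A`, and `inr false` the
winner for the reversed tournament, i.e. the loser. -/
noncomputable def tournamentColor (S : Set F) (A : Finset (F ⊕ Bool)) : F :=
  ∑ c ∈ A.toLeft, c + ∑ b ∈ A.toRight, winnerSum (orient S b) A.toLeft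

lemma tournamentColor_insert_inl_inl_ne (hS : IsTournamentSet S) {c d : F} (hcd : c ≠ d)
    {x y : F ⊕ Bool} (hx : x ∉ ({inl c, inl d} : Finset _))
    (hy : y ∉ ({inl c, inl d} : Finset _)) (hxy : x ≠ y) :
    tournamentColor S {x, inl c, inl d} ≠ tournamentColor S {y, inl c, inl d} := by
  have color_inl {e : F} (he : e ≠ c ∧ e ≠ d) :
      tournamentColor S {inl e, inl c, inl d} = c + d + e := by
    rw [add_comm]
    simp [tournamentColor, sum_pair hcd, he.1, he.2]
  have color_inr (b : Bool) :
      tournamentColor S {inr b, inl c, inl d} = c + d + winnerSum (orient S b) {c, d} := by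
    simp [tournamentColor, sum_pair hcd]
  have winner_ne {e : F} (he : e ≠ c ∧ e ≠ d) (b : Bool) : e ≠ winnerSum (orient S b) {c, d} := by
    rcases (isTournamentSet_orient hS b).winnerSum_pair_mem hcd with h | h <;> rw [h]
    exacts [he.1, he.2]
  rcases x with e | b <;> rcases y with e' | b' <;>
    simp only [mem_insert, mem_singleton, inl.injEq, inr.injEq, reduceCtorEq, not_or, or_self,
      not_false_eq_true, ne_eq] at hx hy hxy
  · rw [color_inl hx, color_inl hy]
    exact fun h ↦ hxy (add_left_cancel h)
  · rw [color_inl hx, color_inr]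
    exact fun h ↦ winner_ne hx b' (add_left_cancel h)
  · rw [color_inr, color_inl hy]
    exact fun h ↦ winner_ne hy b (add_left_cancel h).symm
  · rw [color_inr, color_inr]
    exact fun h ↦ winnerSum_orient_ne hS hcd hxy (add_left_cancel h)

lemma tournamentColor_insert_inr_inl_ne (hS : IsTournamentSet S) (hS2 : ∀ x ∈ S, 2 * x ∈ S)
    (h2 : (2 : F) ≠ 0) {b : Bool} {d : F} {x y : F ⊕ Bool}
    (hx : x ∉ ({inr b, inl d} : Finset _)) (hy : y ∉ ({inr b, inl d} : Finset _))
    (hxy : x ≠ y) :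
    tournamentColor S {x, inr b, inl d} ≠ tournamentColor S {y, inr b, inl d} := by
  have hinj := doubleOn_injective (orient_two_mul_mem hS2 b) h2
  have color_inl {c : F} (hcd : c ≠ d) :
      tournamentColor S {inl c, inr b, inl d} = 3 * d + doubleOn (orient S b) (c - d) := by
    rw [← (isTournamentSet_orient hS b).add_add_winnerSum_pair hcd]
    simp [tournamentColor, sum_pair hcd]
  have color_inr {b' : Bool} (hb : b' ≠ b) : tournamentColor S {inr b', inr b, inl d} = 3 * d := by
    rw [show 3 * d = d + 2 * d by ring]
    simp [tournamentColor, winnerSum_singleton, hb]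
  rcases x with c | b' <;> rcases y with c' | b'' <;>
    simp only [mem_insert, mem_singleton, inl.injEq, inr.injEq, reduceCtorEq, or_false, false_or,
      not_false_eq_true, ne_eq] at hx hy hxy
  · rw [color_inl hx, color_inl hy]
    exact fun h ↦ hxy (sub_left_inj.1 (hinj (add_left_cancel h)))
  · rw [color_inl hx, color_inr hy]
    exact fun h ↦ hx (sub_eq_zero.1 (hinj ((add_eq_left.1 h).trans (doubleOn_zero _).symm)))
  · rw [color_inr hx, color_inl hy]
    exact fun h ↦ hy (sub_eq_zero.1 (hinj ((add_eq_left.1 h.symm).trans (doubleOn_zero _).symm)))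
  · cases b <;> cases b' <;> cases b'' <;> simp_all

lemma tournamentColor_insert_inr_inr_ne (h3 : (3 : F) ≠ 0) {b b' : Bool} (hb : b ≠ b')
    {x y : F ⊕ Bool} (hx : x ∉ ({inr b, inr b'} : Finset _))
    (hy : y ∉ ({inr b, inr b'} : Finset _)) (hxy : x ≠ y) :
    tournamentColor S {x, inr b, inr b'} ≠ tournamentColor S {y, inr b, inr b'} := by
  have color_inl (c : F) : tournamentColor S {inl c, inr b, inr b'} = 3 * c := by
    rw [show 3 * c = c + 2 * c by ring]
    simp [tournamentColor, winnerSum_singleton, hb]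
  rcases x with c | b₁ <;> rcases y with c' | b₂ <;>
    simp only [mem_insert, mem_singleton, inl.injEq, inr.injEq, reduceCtorEq, not_or, or_self,
      not_false_eq_true, ne_eq] at hx hy hxy
  · rw [color_inl, color_inl]
    exact fun h ↦ hxy (mul_left_cancel₀ h3 h)
  all_goals cases b <;> cases b' <;> simp_all

theorem tournamentColor_insert_ne (hS : IsTournamentSet S) (hS2 : ∀ x ∈ S, 2 * x ∈ S)
    (h2 : (2 : F) ≠ 0) (h3 : (3 : F) ≠ 0) {I : Finset (F ⊕ Bool)} (hI : #I = 2)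
    {x y : F ⊕ Bool} (hx : x ∉ I) (hy : y ∉ I) (hxy : x ≠ y) :
    tournamentColor S (insert x I) ≠ tournamentColor S (insert y I) := by
  obtain ⟨a, b, hab, rfl⟩ := card_eq_two.1 hI
  rcases a with c | b₁ <;> rcases b with d | b₂
  · exact tournamentColor_insert_inl_inl_ne hS (by simpa using hab) hx hy hxy
  · rw [pair_comm] at hx hy ⊢
    exact tournamentColor_insert_inr_inl_ne hS hS2 h2 hx hy hxy
  · exact tournamentColor_insert_inr_inl_ne hS hS2 h2 hx hy hxy
  · exact tournamentColor_insert_inr_inr_ne h3 (by simpa using hab) hx hy hxy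

noncomputable def tournamentColoring {n : ℕ} (e : Fin n ≃ F ⊕ Bool) (hS : IsTournamentSet S)
    (hS2 : ∀ x ∈ S, 2 * x ∈ S) (h2 : (2 : F) ≠ 0) (h3 : (3 : F) ≠ 0) :
    (distGraph n 3 2).Coloring F :=
  SimpleGraph.Coloring.mk (fun A ↦ tournamentColor S (A.1.map e.toEmbedding)) fun {A B} hAB ↦ by
    obtain ⟨x, y, hxy, hx, hy, hxA, hyB⟩ :=
      Finset.exists_eq_insert_inter_of_card_inter A.2 B.2 hAB.2
    have key := tournamentColor_insert_ne hS hS2 h2 h3 (I := (A.1 ∩ B.1).map e.toEmbedding)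
      (x := e.toEmbedding x) (y := e.toEmbedding y) (by simpa using hAB.2) (by simpa using hx)
      (by simpa using hy) (by simpa using hxy)
    rwa [← map_insert, ← map_insert, hxA, hyB] at key

end Coloring

theorem stmt_0 (p : ℕ) (hp : p.Prime) (hp3 : 3 < p)
    (h2 : ∀ r : ℕ, (2 : ZMod p) ^ r ≠ -1) :
    (distGraph (p + 2) 3 2).chromaticNumber ≤ ((p + 2) - 2 : ℕ) := by
  have := Fact.mk hp
  have natCast_ne_zero {k : ℕ} (hk0 : 0 < k) (hk : k < p) : (k : ZMod p) ≠ 0 := fun h ↦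
    absurd (Nat.le_of_dvd hk0 ((ZMod.natCast_eq_zero_iff k p).1 h)) (not_le.2 hk)
  have htwo : (2 : ZMod p) ≠ 0 := by exact_mod_cast natCast_ne_zero two_pos (by omega)
  have hthree : (3 : ZMod p) ≠ 0 := by exact_mod_cast natCast_ne_zero three_pos hp3
  have hneg : -1 ∉ Subgroup.zpowers (Units.mk0 (2 : ZMod p) htwo) := by
    rw [← mem_powers_iff_mem_zpowers]
    rintro ⟨r, hr⟩
    exact h2 r (by simpa using congrArg Units.val hr)
  obtain ⟨S, hS, hS2⟩ := exists_isTournamentSet_mul_mem _ hneg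
  let e : Fin (p + 2) ≃ ZMod p ⊕ Bool := Fintype.equivOfCardEq (by simp)
  calc _ ≤ (Fintype.card (ZMod p) : ℕ∞) :=
        (tournamentColoring e hS hS2 htwo hthree).colorable.chromaticNumber_le
    _ = ((p + 2) - 2 : ℕ) := by simp
end

section
/- Let p > 3 be a prime such that for every natural number r the congruence 2^r ≡ −1 (mod p) fails. Then for n = p + 1 the chromatic number of G(n, 3, 2) satisfies χ(G(n, 3, 2)) ≤ n − 1. -/
open Finset

theorem Function.Involutive.exists_set_apply_mem_iff_notMem {α : Type*} {f : α → α}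
    (hf : Function.Involutive f) (hfix : ∀ x, f x ≠ x) :
    ∃ s : Set α, ∀ x, f x ∈ s ↔ x ∉ s := by
  refine ⟨{x | WellOrderingRel x (f x)}, fun x => ?_⟩
  simp only [Set.mem_ofPred_eq, hf x]
  refine ⟨fun h h' => asymm h h', fun h => ?_⟩
  exact (trichotomous_of WellOrderingRel x (f x)).resolve_left h |>.resolve_left (hfix x).symm

theorem CommGroup.exists_set_mul_mem_iff_notMem {M : Type*} [CommGroup M] {K : Subgroup M} {ε : M}
    (hε : ε * ε = 1) (hεK : ε ∉ K) :
    ∃ T : Set M, (∀ g, ε * g ∈ T ↔ g ∉ T) ∧ ∀ k ∈ K, ∀ g ∈ T, k * g ∈ T := by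
  have hinv : Function.Involutive fun q : M ⧸ K => (ε : M ⧸ K) * q := fun q => by
    simp only [← mul_assoc, ← QuotientGroup.mk_mul, hε, QuotientGroup.mk_one, one_mul]
  have hfix : ∀ q : M ⧸ K, (ε : M ⧸ K) * q ≠ q := fun q h =>
    hεK ((QuotientGroup.eq_one_iff ε).mp (mul_eq_right.mp h))
  obtain ⟨s, hs⟩ := hinv.exists_set_apply_mem_iff_notMem hfix
  refine ⟨(↑) ⁻¹' s, fun g => by simpa using hs g, fun k hk g hg => ?_⟩
  simpa [(QuotientGroup.eq_one_iff k).mpr hk] using hg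

variable {G : Type*} [AddCommGroup G]

def IsHalfSystem (S : Set G) : Prop :=
  ∀ x ≠ 0, -x ∈ S ↔ x ∉ S

namespace IsHalfSystem

variable {S : Set G} (hS : IsHalfSystem S)
include hS

theorem sub_mem_iff {a b : G} (hab : a ≠ b) : b - a ∈ S ↔ a - b ∉ S := by
  rw [← neg_sub, hS _ (sub_ne_zero.mpr hab)]

theorem eq_of_add_self_eq_add_self {x y : G} (h : x + x = y + y) : x = y := by
  by_contra hxy
  have hneg : -(x - y) = x - y :=
    neg_eq_of_add_eq_zero_left (by rw [← sub_eq_zero.mpr h]; abel)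
  exact iff_not_self (hneg ▸ hS _ (sub_ne_zero.mpr hxy))

theorem add_self_add_ne (hS2 : ∀ x ∈ S, x + x ∈ S) {x y m : G} (hym : y ≠ m)
    (hx : x - m ∈ S) (hy : m - y ∈ S) : x + x + m ≠ m + m + y := by
  intro h
  have hy' : y - m = (x - m) + (x - m) := by
    rw [← sub_eq_zero, ← neg_eq_zero, ← sub_eq_zero.mpr h]; abel
  exact (hS.sub_mem_iff hym).mp hy (hy' ▸ hS2 _ hx)

end IsHalfSystem

theorem exists_isHalfSystem_of_two_pow_ne_neg_one {F : Type*} [Field F]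
    (h2 : ∀ r : ℕ, (2 : F) ^ r ≠ -1) : ∃ S : Set F, IsHalfSystem S ∧ ∀ x ∈ S, x + x ∈ S := by
  have two_ne_zero : (2 : F) ≠ 0 := fun h =>
    h2 0 (by rw [pow_zero, eq_neg_iff_add_eq_zero, one_add_one_eq_two, h])
  have hK : (-1 : Fˣ) ∉ Subgroup.zpowers (Units.mk0 2 two_ne_zero) := by
    rintro ⟨k, hk⟩
    obtain ⟨n, rfl | rfl⟩ := Int.eq_nat_or_neg k
    · exact h2 n (by simpa using congrArg Units.val hk)
    · exact h2 n (by simpa [inv_eq_iff_eq_inv] using congrArg Units.val hk)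
  obtain ⟨T, hT, hT2⟩ := CommGroup.exists_set_mul_mem_iff_notMem (by simp) hK
  refine ⟨Units.val '' T, fun x hx => ?_, ?_⟩
  · have := hT (Units.mk0 x hx)
    rw [← Units.val_injective.mem_set_image, ← Units.val_injective.mem_set_image] at this
    simpa using this
  · rintro _ ⟨u, hu, rfl⟩
    exact ⟨_, hT2 _ (Subgroup.mem_zpowers _) u hu, by simp [two_mul]⟩

theorem Finset.exists_notMem_eq_insert_inter {α : Type*} [DecidableEq α] {A B : Finset α}
    (h : #A = #(A ∩ B) + 1) : ∃ x ∉ B, A = insert x (A ∩ B) := by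
  obtain ⟨x, hx⟩ := card_eq_one.mp (by have := card_sdiff_add_card_inter A B; omega :
    #(A \ B) = 1)
  refine ⟨x, (mem_sdiff.mp (hx ▸ mem_singleton_self x)).2, ?_⟩
  rw [insert_eq, ← hx, sdiff_union_inter]

theorem Finset.sum_ne_sum_of_card_inter [DecidableEq G] {A B : Finset G}
    (hA : #A = #(A ∩ B) + 1) (hB : #B = #(A ∩ B) + 1) : ∑ a ∈ A, a ≠ ∑ b ∈ B, b := by
  obtain ⟨x, hxB, hAx⟩ := exists_notMem_eq_insert_inter hA
  rw [inter_comm] at hB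
  obtain ⟨y, hyA, hBy⟩ := exists_notMem_eq_insert_inter hB
  rw [inter_comm] at hBy
  have hxy : x ≠ y := fun h => hxB (h ▸ hBy ▸ mem_insert_self y _)
  set C := A ∩ B
  rw [hAx, hBy, sum_insert (fun h => hxB (mem_inter.mp h).2),
    sum_insert (fun h => hyA (mem_inter.mp h).1)]
  exact fun h => hxy (add_right_cancel h)

-- `none` is the point at infinity; `a` beats `b` when `a - b ∈ S`.
open Classical in
noncomputable def tripleColor (S : Set G) (A : Finset (Option G)) : G :=
  ∑ a ∈ eraseNone A, a +
    if none ∈ A then ∑ a ∈ eraseNone A with ∀ b ∈ eraseNone A, b ≠ a → a - b ∈ S, a else 0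

variable {S : Set G}

theorem tripleColor_of_none_notMem {A : Finset (Option G)} (hA : none ∉ A) :
    tripleColor S A = ∑ a ∈ eraseNone A, a := by
  simp [tripleColor, hA]

variable [DecidableEq G]

theorem tripleColor_of_eraseNone_eq_pair (hS : IsHalfSystem S) {A : Finset (Option G)}
    (hA : none ∈ A) {a b : G} (hab : a ≠ b) (hAab : eraseNone A = {a, b}) (hS_ab : a - b ∈ S) :
    tripleColor S A = a + a + b := by
  have hba : b - a ∉ S := fun h => (hS.sub_mem_iff hab).mp h hS_ab
  classical
  have hwinner : ({a, b} : Finset G).filter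
      (fun c => ∀ d ∈ ({a, b} : Finset G), d ≠ c → c - d ∈ S) = {a} := by
    ext c
    simp only [mem_filter, mem_insert, mem_singleton]
    constructor
    · rintro ⟨rfl | rfl, h⟩
      · rfl
      · exact absurd (h a (.inl rfl) hab) hba
    · rintro rfl
      exact ⟨.inl rfl, by grind⟩
  simp only [tripleColor, hA, if_true, hAab, hwinner, sum_pair hab, sum_singleton]
  abel

theorem tripleColor_eq_or_of_eraseNone_eq_pair (hS : IsHalfSystem S) {A : Finset (Option G)}
    (hA : none ∈ A) {a b : G} (hab : a ≠ b) (hAab : eraseNone A = {a, b}) :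
    a - b ∈ S ∧ tripleColor S A = a + a + b ∨ b - a ∈ S ∧ tripleColor S A = b + b + a := by
  by_cases h : a - b ∈ S
  · exact .inl ⟨h, tripleColor_of_eraseNone_eq_pair hS hA hab hAab h⟩
  · have h' : b - a ∈ S := (hS.sub_mem_iff hab).mpr h
    exact .inr ⟨h', tripleColor_of_eraseNone_eq_pair hS hA hab.symm (by rw [hAab, pair_comm]) h'⟩

section Adjacent

variable {A B : Finset (Option G)} (h3A : #A = 3) (h3B : #B = 3) (h2AB : #(A ∩ B) = 2)
include h3A h3B h2AB

theorem tripleColor_ne_of_none_notMem (hA : none ∉ A) (hB : none ∉ B) :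
    tripleColor S A ≠ tripleColor S B := by
  have hAB : none ∉ A ∩ B := fun h => hA (mem_inter.mp h).1
  rw [tripleColor_of_none_notMem hA, tripleColor_of_none_notMem hB]
  apply sum_ne_sum_of_card_inter <;>
    rw [← eraseNone_inter, card_eraseNone_of_not_mem hAB, h2AB] <;>
    simp [card_eraseNone_of_not_mem, *]

theorem tripleColor_ne_of_none_mem_of_none_notMem (hS : IsHalfSystem S) (hA : none ∈ A)
    (hB : none ∉ B) : tripleColor S A ≠ tripleColor S B := by
  have hAB : none ∉ A ∩ B := fun h => hB (mem_inter.mp h).2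
  have hTA : #(eraseNone A) = 2 := by rw [card_eraseNone_of_mem hA, h3A]
  have hTB : #(eraseNone B) = 3 := by rw [card_eraseNone_of_not_mem hB, h3B]
  have hTAB : eraseNone B ∩ eraseNone A = eraseNone A := by
    refine eq_of_subset_of_card_le inter_subset_right ?_
    rw [inter_comm, ← eraseNone_inter, card_eraseNone_of_not_mem hAB, h2AB, hTA]
  obtain ⟨y, hyA, hBy⟩ := exists_notMem_eq_insert_inter (A := eraseNone B) (B := eraseNone A)
    (by rw [hTAB, hTA, hTB])
  obtain ⟨a, b, hab, hAab⟩ := card_eq_two.mp hTA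
  rw [hTAB, hAab] at hBy
  rw [hAab] at hyA
  rw [tripleColor_of_none_notMem hB, hBy, sum_insert hyA, sum_pair hab]
  rcases tripleColor_eq_or_of_eraseNone_eq_pair hS hA hab hAab with ⟨-, h⟩ | ⟨-, h⟩ <;>
    rw [h] <;> intro h' <;> apply hyA
  · simp [add_right_cancel ((add_assoc a a b).symm.trans h')]
  · simp [add_right_cancel (b := a + b) (a := b) (by rw [← h']; abel)]

theorem tripleColor_ne_of_none_mem (hS : IsHalfSystem S) (hS2 : ∀ x ∈ S, x + x ∈ S)
    (hA : none ∈ A) (hB : none ∈ B) : tripleColor S A ≠ tripleColor S B := by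
  have hTA : #(eraseNone A) = 2 := by rw [card_eraseNone_of_mem hA, h3A]
  have hTB : #(eraseNone B) = 2 := by rw [card_eraseNone_of_mem hB, h3B]
  have hTAB : #(eraseNone A ∩ eraseNone B) = 1 := by
    rw [← eraseNone_inter, card_eraseNone_of_mem (mem_inter.mpr ⟨hA, hB⟩), h2AB]
  obtain ⟨x, hxB, hAx⟩ := exists_notMem_eq_insert_inter (by rw [hTA, hTAB])
  obtain ⟨y, hyA, hBy⟩ := exists_notMem_eq_insert_inter (A := eraseNone B) (B := eraseNone A)
    (by rw [inter_comm, hTB, hTAB])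
  obtain ⟨m, hm⟩ := card_eq_one.mp hTAB
  rw [inter_comm, hm] at hBy
  rw [hm] at hAx
  have hxm : x ≠ m := by rintro rfl; exact hxB (hBy ▸ mem_insert_of_mem (mem_singleton_self x))
  have hym : y ≠ m := by rintro rfl; exact hyA (hAx ▸ mem_insert_of_mem (mem_singleton_self y))
  have hxy : x ≠ y := by rintro rfl; exact hxB (hBy ▸ mem_insert_self x _)
  rcases tripleColor_eq_or_of_eraseNone_eq_pair hS hA hxm hAx with ⟨hx, hcA⟩ | ⟨hx, hcA⟩ <;>
    rcases tripleColor_eq_or_of_eraseNone_eq_pair hS hB hym hBy with ⟨hy, hcB⟩ | ⟨hy, hcB⟩ <;>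
    rw [hcA, hcB]
  · exact fun h => hxy (hS.eq_of_add_self_eq_add_self (add_right_cancel h))
  · exact hS.add_self_add_ne hS2 hym hx hy
  · exact (hS.add_self_add_ne hS2 hxm hy hx).symm
  · exact fun h => hxy (add_left_cancel h)

theorem tripleColor_ne (hS : IsHalfSystem S) (hS2 : ∀ x ∈ S, x + x ∈ S) :
    tripleColor S A ≠ tripleColor S B := by
  by_cases hA : none ∈ A <;> by_cases hB : none ∈ B
  · exact tripleColor_ne_of_none_mem h3A h3B h2AB hS hS2 hA hB
  · exact tripleColor_ne_of_none_mem_of_none_notMem h3A h3B h2AB hS hA hB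
  · exact (tripleColor_ne_of_none_mem_of_none_notMem h3B h3A (by rwa [inter_comm]) hS hB hA).symm
  · exact tripleColor_ne_of_none_notMem h3A h3B h2AB hA hB

end Adjacent

theorem distGraph_three_two_colorable [Fintype G] (hS : IsHalfSystem S)
    (hS2 : ∀ x ∈ S, x + x ∈ S) {n : ℕ} (e : Fin n ↪ Option G) :
    (distGraph n 3 2).Colorable (Fintype.card G) :=
  SimpleGraph.Coloring.colorable <| .mk (fun A => tripleColor S (A.1.map e)) fun {A B} hAB =>
    tripleColor_ne (by simp [A.2]) (by simp [B.2]) (by rw [← map_inter, card_map, hAB.2]) hS hS2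

theorem stmt_1_general (p : ℕ) (hp : p.Prime)
    (h2 : ∀ r : ℕ, (2 : ZMod p) ^ r ≠ -1) :
    (distGraph (p + 1) 3 2).chromaticNumber ≤ ((p + 1) - 1 : ℕ) := by
  have := Fact.mk hp
  obtain ⟨S, hS, hS2⟩ := exists_isHalfSystem_of_two_pow_ne_neg_one h2
  have e : Fin (p + 1) ≃ Option (ZMod p) := Fintype.equivOfCardEq (by simp)
  simpa using (distGraph_three_two_colorable hS hS2 e.toEmbedding).chromaticNumber_le

theorem stmt_1 (p : ℕ) (hp : p.Prime) (hp3 : 3 < p)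
    (h2 : ∀ r : ℕ, (2 : ZMod p) ^ r ≠ -1) :
    (distGraph (p + 1) 3 2).chromaticNumber ≤ ((p + 1) - 1 : ℕ) :=
  stmt_1_general p hp h2
end

section
/- For all integers n ≥ r ≥ 2 with n − r even, the chromatic number of G(n, r, r−1) satisfies χ(G(n, r, r−1)) ≥ n − r + 1. -/
/-! The sets `insert x B` with `B` a fixed `(r-1)`-set and `x ∉ B` pairwise meet exactly in `B`,
so they form a clique of size `n - (r - 1)` in `G(n, r, r-1)`. -/

open Finset SimpleGraph

theorem Finset.insert_inter_insert_of_ne {α : Type*} [DecidableEq α] {s : Finset α} {a b : α}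
    (hab : a ≠ b) : insert a s ∩ insert b s = s := by
  ext x
  simp only [mem_inter, mem_insert]
  grind

theorem le_chromaticNumber_distGraph_of_card_add_one {n r : ℕ} (B : Finset (Fin n))
    (hB : #B + 1 = r) : ((n - #B : ℕ) : ℕ∞) ≤ (distGraph n r (r - 1)).chromaticNumber := by
  refine le_chromaticNumber_of_pairwise_adj (ι := {x // x ∉ B})
    (by simp [Nat.card_eq_fintype_card, Fintype.card_subtype_compl])
    (fun x => ⟨insert x.1 B, by rw [card_insert_of_notMem x.2, hB]⟩) fun x y hxy => ?_
  have hne : x.1 ≠ y.1 := Subtype.coe_ne_coe.2 hxy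
  refine ⟨?_, ?_⟩
  · simpa [Subtype.ext_iff, insert_inj x.2] using hne
  · change #(insert x.1 B ∩ insert y.1 B) = r - 1
    rw [insert_inter_insert_of_ne hne]
    omega

theorem stmt_3_general (n r : ℕ) (hr : 2 ≤ r) (hn : r ≤ n) :
    ((n - r + 1 : ℕ) : ℕ∞) ≤ (distGraph n r (r - 1)).chromaticNumber := by
  obtain ⟨B, -, hB⟩ := exists_subset_card_eq (s := (univ : Finset (Fin n))) (n := r - 1)
    (by simp only [card_univ, Fintype.card_fin]; omega)
  convert le_chromaticNumber_distGraph_of_card_add_one B (r := r) (by omega) using 3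
  omega

theorem stmt_3 (n r : ℕ) (hr : 2 ≤ r) (hn : r ≤ n) (hpar : Even (n - r)) :
    ((n - r + 1 : ℕ) : ℕ∞) ≤ (distGraph n r (r - 1)).chromaticNumber :=
  stmt_3_general n r hr hn
end

section
/- For all integers n ≥ r ≥ 2 with n − r odd, the chromatic number of G(n, r, r−1) satisfies χ(G(n, r, r−1)) ≥ n − r + 2. -/
/-!
Adding the same `r - 2` points to each `2`-subset of the remaining `m = n - r + 2` points
embeds `G(m, 2, 1)`, the line graph of `K_m`, into `G(n, r, r - 1)`. A colour class of
`G(m, 2, 1)` is a set of pairwise disjoint pairs, hence has at most `(m - 1) / 2` elements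
when `m` is odd; since there are `m (m - 1) / 2` pairs, at least `m` colours are needed.
-/

open Finset

lemma Finset.card_mul_le_card_of_pairwiseDisjoint {ι α : Type*} [Fintype α] [DecidableEq α]
    {s : Finset ι} {f : ι → Finset α} {k : ℕ} (hf : ∀ i ∈ s, #(f i) = k)
    (hs : (s : Set ι).PairwiseDisjoint f) : #s * k ≤ Fintype.card α :=
  calc #s * k = ∑ i ∈ s, #(f i) := by rw [sum_congr rfl hf, sum_const, smul_eq_mul]
    _ = #(s.biUnion f) := (card_biUnion hs).symm
    _ ≤ Fintype.card α := card_le_univ _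

namespace Finset

variable {m : ℕ} (k : ℕ) (A B : Finset (Fin m))

def padLeft : Finset (Fin (k + m)) :=
  univ.map (Fin.castAddEmb m) ∪ A.map (Fin.natAddEmb k)

lemma disjoint_map_castAdd_map_natAdd :
    Disjoint (univ.map (Fin.castAddEmb m)) (A.map (Fin.natAddEmb k)) := by
  simp only [disjoint_left, mem_map, mem_univ, true_and, Fin.castAddEmb_apply,
    Fin.natAddEmb_apply, not_exists, not_and, forall_exists_index, forall_apply_eq_imp_iff]
  intro i j _ h
  have := congrArg Fin.val h
  simp only [Fin.val_castAdd, Fin.val_natAdd] at this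
  omega

lemma card_padLeft : #(A.padLeft k) = k + #A := by
  rw [padLeft, card_union_of_disjoint (disjoint_map_castAdd_map_natAdd k A), card_map, card_map,
    card_univ, Fintype.card_fin]

lemma padLeft_inter : (A ∩ B).padLeft k = A.padLeft k ∩ B.padLeft k := by
  rw [padLeft, padLeft, padLeft, ← union_inter_distrib_left, map_inter]

lemma natAdd_mem_padLeft {i : Fin m} : Fin.natAdd k i ∈ A.padLeft k ↔ i ∈ A := by
  simp only [padLeft, mem_union, mem_map, mem_univ, true_and, Fin.castAddEmb_apply,
    Fin.natAddEmb_apply, (Fin.natAdd_injective m k).eq_iff, exists_eq_right,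
    or_iff_right_iff_imp, forall_exists_index]
  intro j h
  have := congrArg Fin.val h
  simp only [Fin.val_castAdd, Fin.val_natAdd] at this
  omega

lemma padLeft_injective : Function.Injective (padLeft (m := m) k) := fun A B h => by
  ext i
  rw [← natAdd_mem_padLeft k A, ← natAdd_mem_padLeft k B, h]

end Finset

namespace distGraph

def padLeftHom (k : ℕ) {m t s : ℕ} : distGraph m t s →g distGraph (k + m) (k + t) (k + s) where
  toFun A := ⟨A.1.padLeft k, by rw [card_padLeft, A.2]⟩
  map_rel' {A B} h := by
    refine ⟨fun hAB => h.1 (Subtype.ext (padLeft_injective k (congrArg Subtype.val hAB))), ?_⟩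
    change #(A.1.padLeft k ∩ B.1.padLeft k) = k + s
    rw [← padLeft_inter, card_padLeft, h.2]

lemma disjoint_of_ne_of_not_adj {m : ℕ} {A B : {A : Finset (Fin m) // #A = 2}} (hAB : A ≠ B)
    (h : ¬(distGraph m 2 1).Adj A B) : Disjoint A.1 B.1 := by
  obtain ⟨A, hA⟩ := A
  obtain ⟨B, hB⟩ := B
  change Disjoint A B
  rw [disjoint_iff_inter_eq_empty, ← card_eq_zero]
  have h_le : #(A ∩ B) ≤ 2 := hA ▸ card_le_card inter_subset_left
  have h_ne_one : #(A ∩ B) ≠ 1 := fun h1 => h ⟨hAB, h1⟩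
  have h_ne_two : #(A ∩ B) ≠ 2 := fun h2 => hAB <| Subtype.ext <| show A = B from
    calc A = A ∩ B := (eq_of_subset_of_card_le inter_subset_left (by rw [hA, h2])).symm
      _ = B := eq_of_subset_of_card_le inter_subset_right (by rw [hB, h2])
  omega

lemma card_colorClass_mul_two_le {m : ℕ} {β : Type*} [DecidableEq β]
    (C : (distGraph m 2 1).Coloring β) (b : β) : #{A | C A = b} * 2 ≤ m := by
  have := card_mul_le_card_of_pairwiseDisjoint (s := {A | C A = b}) (f := Subtype.val)
    (fun A _ => A.2) fun A hA B hB hAB => by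
      simp only [coe_filter, mem_univ, true_and, Set.mem_ofPred_eq] at hA hB
      exact disjoint_of_ne_of_not_adj hAB fun hadj => C.valid hadj (hA.trans hB.symm)
  simpa using this

theorem le_chromaticNumber_two_one {m : ℕ} (hm : Odd m) (h1 : 1 < m) :
    (m : ℕ∞) ≤ (distGraph m 2 1).chromaticNumber := by
  obtain ⟨t, rfl⟩ := hm
  refine SimpleGraph.le_chromaticNumber_iff_coloring.2 fun k C => Nat.cast_le.2 ?_
  by_contra! hk
  have h_card :
      Fintype.card (Fin k) * t < Fintype.card {A : Finset (Fin (2 * t + 1)) // #A = 2} := by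
    rw [Fintype.card_finset_len, Fintype.card_fin, Fintype.card_fin, Nat.choose_two_right,
      show (2 * t + 1) * (2 * t + 1 - 1) / 2 = (2 * t + 1) * t by
        rw [Nat.add_sub_cancel, mul_left_comm, Nat.mul_div_cancel_left _ two_pos]]
    nlinarith
  obtain ⟨b, hb⟩ := Fintype.exists_lt_card_fiber_of_mul_lt_card C h_card
  have := card_colorClass_mul_two_le C b
  omega

end distGraph

theorem stmt_4_general (n r : ℕ) (hr : 2 ≤ r) (hpar : Odd (n - r)) :
    ((n - r + 2 : ℕ) : ℕ∞) ≤ (distGraph n r (r - 1)).chromaticNumber := by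
  obtain ⟨k, rfl⟩ : ∃ k, r = k + 2 := ⟨r - 2, by omega⟩
  obtain ⟨t, ht⟩ := hpar
  obtain ⟨m, rfl⟩ : ∃ m, n = k + m := ⟨n - k, by omega⟩
  rw [show k + m - (k + 2) + 2 = m by omega, show k + 2 - 1 = k + 1 by omega]
  calc (m : ℕ∞) ≤ (distGraph m 2 1).chromaticNumber :=
        distGraph.le_chromaticNumber_two_one ⟨t + 1, by omega⟩ (by omega)
    _ ≤ (distGraph (k + m) (k + 2) (k + 1)).chromaticNumber :=
        SimpleGraph.chromaticNumber_mono_of_hom (distGraph.padLeftHom k)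

theorem stmt_4 (n r : ℕ) (hr : 2 ≤ r) (hn : r ≤ n) (hpar : Odd (n - r)) :
    ((n - r + 2 : ℕ) : ℕ∞) ≤ (distGraph n r (r - 1)).chromaticNumber :=
  stmt_4_general n r hr hpar
end

section
/- Let r be a prime and let n = r·k − 1 for some positive integer k with n ≥ r. Then the chromatic number of G(n, r, r−1) satisfies χ(G(n, r, r−1)) ≥ n − r + 2. -/
open Finset

theorem Nat.choose_pred_modEq_one {p n : ℕ} (hp : p.Prime) (h : p ∣ n + 1) :
    n.choose (p - 1) ≡ 1 [MOD p] := by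
  have : Fact p.Prime := ⟨hp⟩
  have hlt : p - 1 < p := Nat.sub_lt hp.pos one_pos
  have hmod : n % p = p - 1 := by
    have hn : n + 1 ≡ p - 1 + 1 [MOD p] := by
      rw [Nat.sub_add_cancel hp.one_le]
      exact (Nat.modEq_zero_iff_dvd.2 h).trans (Nat.modEq_zero_iff_dvd.2 dvd_rfl).symm
    rw [Nat.ModEq.add_right_cancel' 1 hn, Nat.mod_eq_of_lt hlt]
  have hlucas := Choose.choose_modEq_choose_mod_mul_choose_div_nat (n := n) (k := p - 1) (p := p)
  rwa [hmod, Nat.mod_eq_of_lt hlt, Nat.div_eq_of_lt hlt, Nat.choose_self, Nat.choose_zero_right,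
    one_mul] at hlucas

namespace distGraph

variable {n m : ℕ}

theorem adj_of_subset_inter {A B : {A : Finset (Fin n) // A.card = m + 1}} (hAB : A ≠ B)
    {S : Finset (Fin n)} (hS : S.card = m) (hSA : S ⊆ A.1) (hSB : S ⊆ B.1) :
    (distGraph n (m + 1) m).Adj A B := by
  refine ⟨hAB, le_antisymm ?_ (hS.symm.trans_le (card_le_card (subset_inter hSA hSB)))⟩
  by_contra! hlt
  have hA : A.1 ∩ B.1 = A.1 := eq_of_subset_of_card_le inter_subset_left (by rw [A.2]; exact hlt)
  have hB : A.1 ∩ B.1 = B.1 := eq_of_subset_of_card_le inter_subset_right (by rw [B.2]; exact hlt)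
  exact hAB (Subtype.ext (hA.symm.trans hB))

variable {α : Type*} (C : (distGraph n (m + 1) m).Coloring α)

theorem eq_of_subset_of_color_eq {A B : {A : Finset (Fin n) // A.card = m + 1}}
    {S : Finset (Fin n)} (hS : S.card = m) (hSA : S ⊆ A.1) (hSB : S ⊆ B.1) (hAB : C A = C B) :
    A = B := by
  by_contra hne
  exact C.valid (adj_of_subset_inter hne hS hSA hSB) hAB

theorem existsUnique_superset_color [Fintype α] (hα : Fintype.card α = n - m)
    {S : Finset (Fin n)} (hS : S.card = m) (c : α) :
    ∃! A : {A : Finset (Fin n) // A.card = m + 1}, C A = c ∧ S ⊆ A.1 := by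
  classical
  let F : {x // x ∈ Sᶜ} → {A : Finset (Fin n) // A.card = m + 1} := fun x =>
    ⟨insert x.1 S, by rw [card_insert_of_notMem (mem_compl.mp x.2), hS]⟩
  have hF : ∀ x, S ⊆ (F x).1 := fun x => subset_insert _ _
  have hinj : Function.Injective (C ∘ F) := by
    intro x y hxy
    have hFxy := eq_of_subset_of_color_eq C hS (hF x) (hF y) hxy
    have hx : x.1 ∈ (F y).1 := hFxy ▸ mem_insert_self _ _
    exact Subtype.ext ((mem_insert.mp hx).resolve_right (mem_compl.mp x.2))
  have hsurj : Function.Surjective (C ∘ F) :=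
    ((Fintype.bijective_iff_injective_and_card _).2 ⟨hinj, by simp [hS, hα]⟩).2
  obtain ⟨x, hx⟩ := hsurj c
  exact ⟨F x, ⟨hx, hF x⟩, fun B hB =>
    eq_of_subset_of_color_eq C hS hB.2 (hF x) (hB.1.trans hx.symm)⟩

theorem card_colorClass_mul [Fintype α] [DecidableEq α] (hα : Fintype.card α = n - m) (c : α) :
    #{A | C A = c} * (m + 1) = n.choose m := by
  classical
  have hdouble := card_mul_eq_card_mul (fun A S => S ⊆ A.1) (s := {A | C A = c})
    (t := powersetCard m univ) (m := m + 1) (n := 1) ?_ ?_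
  · simpa [card_powersetCard] using hdouble
  · intro A _
    have hsub :
        (powersetCard m univ).bipartiteAbove (fun A S => S ⊆ A.1) A = powersetCard m A.1 := by
      ext S
      simp [bipartiteAbove, mem_powersetCard, and_comm]
    rw [hsub, card_powersetCard, A.2, Nat.choose_succ_self_right]
  · intro S hS
    rw [card_eq_one_iff_existsUnique]
    simpa [bipartiteBelow] using
      existsUnique_superset_color C hα (mem_powersetCard.1 hS).2 c

theorem not_colorable {p n : ℕ} (hp : p.Prime) (hpn : p ≤ n) (h : p ∣ n + 1) :
    ¬ (distGraph n p (p - 1)).Colorable (n - p + 1) := by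
  obtain ⟨m, rfl⟩ : ∃ m, p = m + 1 := Nat.exists_eq_succ_of_ne_zero hp.ne_zero
  rintro ⟨C⟩
  have hclass := card_colorClass_mul C (by rw [Fintype.card_fin]; omega) ⟨0, Nat.succ_pos _⟩
  have hone := Nat.choose_pred_modEq_one hp h
  rw [Nat.add_sub_cancel] at hone
  exact hp.not_dvd_one ((hone.dvd_iff dvd_rfl).1 ⟨_, by rw [← hclass, mul_comm]⟩)

end distGraph

theorem stmt_5_general (n r k : ℕ) (hr : r.Prime) (hn : n = r * k - 1)
    (hnr : r ≤ n) :
    ((n - r + 2 : ℕ) : ℕ∞) ≤ (distGraph n r (r - 1)).chromaticNumber := by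
  have hdvd : r ∣ n + 1 := ⟨k, by
    rw [hn] at hnr ⊢
    generalize r * k = t at hnr ⊢
    have := hr.pos
    omega⟩
  refine SimpleGraph.le_chromaticNumber_iff_colorable.2 fun c hc => ?_
  by_contra! hlt
  exact distGraph.not_colorable hr hnr hdvd (hc.mono (by exact_mod_cast Nat.lt_succ_iff.1 hlt))

theorem stmt_5 (n r k : ℕ) (hr : r.Prime) (hk : 0 < k) (hn : n = r * k - 1)
    (hnr : r ≤ n) :
    ((n - r + 2 : ℕ) : ℕ∞) ≤ (distGraph n r (r - 1)).chromaticNumber :=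
  stmt_5_general n r k hr hn hnr
end

section
/- For every integer n ≥ 3 with n ≡ 0, 2, 4 or 5 (mod 6), the chromatic number of G(n, 3, 2) satisfies χ(G(n, 3, 2)) ≥ n − 1. -/
/-!
A colour class of `G(n, 3, 2)` is a family of triples any two of which meet in at most one
point. Counting the pairs they cover gives `3 |F| ≤ C(n, 2)`, and this is never tight when
`n ≡ 5 (mod 6)` because then `C(n, 2) ≡ 1 (mod 3)`. For even `n`, the triples through a point
meet the other `n - 1` points in disjoint pairs, so each point lies on at most `(n - 2) / 2`
of them and `3 |F| ≤ n (n - 2) / 2 < C(n, 2)`. Thus every colour class has fewer than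
`C(n, 2) / 3` vertices, whereas `n - 2` classes would have to cover all
`C(n, 3) = (n - 2) C(n, 2) / 3` vertices.
-/

open Finset

theorem Nat.choose_two_mul_two (n : ℕ) : n.choose 2 * 2 = n * (n - 1) := by
  simpa using Nat.choose_succ_right_eq n 1

variable {α : Type*}

def IsLinearFamily [DecidableEq α] (F : Finset (Finset α)) : Prop :=
  (F : Set (Finset α)).Pairwise fun A B => #(A ∩ B) ≤ 1

namespace IsLinearFamily

variable [Fintype α] [DecidableEq α] {F : Finset (Finset α)} {k : ℕ}

theorem card_mul_choose_two_le (hF : IsLinearFamily F) (hk : ∀ A ∈ F, #A = k) :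
    #F * k.choose 2 ≤ (Fintype.card α).choose 2 := by
  have hdisj : (F : Set (Finset α)).PairwiseDisjoint (powersetCard 2) := by
    intro A hA B hB hAB
    refine disjoint_left.2 fun p hpA hpB => ?_
    rw [mem_powersetCard] at hpA hpB
    have := card_le_card (subset_inter hpA.1 hpB.1)
    have := hF hA hB hAB
    omega
  calc #F * k.choose 2 = #(F.biUnion (powersetCard 2)) := by
        rw [card_biUnion hdisj, sum_congr rfl fun A hA => by rw [card_powersetCard, hk A hA],
          sum_const, smul_eq_mul]
    _ ≤ #((univ : Finset α).powersetCard 2) :=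
        card_le_card fun p hp => by
          obtain ⟨A, -, hp⟩ := mem_biUnion.1 hp
          exact mem_powersetCard.2 ⟨subset_univ _, (mem_powersetCard.1 hp).2⟩
    _ = (Fintype.card α).choose 2 := by rw [card_powersetCard, card_univ]

theorem card_filter_mem_mul_le (hF : IsLinearFamily F) (hk : ∀ A ∈ F, #A = k) (x : α) :
    #{A ∈ F | x ∈ A} * (k - 1) ≤ Fintype.card α - 1 := by
  have hunique : ∀ y ∈ univ.erase x, #{A ∈ {A ∈ F | x ∈ A} | y ∈ A} ≤ 1 := by
    intro y hy
    refine card_le_one.2 fun A hA B hB => by_contra fun hAB => ?_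
    simp only [mem_filter] at hA hB
    have hpair : {x, y} ⊆ A ∩ B := insert_subset_iff.2
      ⟨mem_inter.2 ⟨hA.1.2, hB.1.2⟩, singleton_subset_iff.2 (mem_inter.2 ⟨hA.2, hB.2⟩)⟩
    have := card_le_card hpair
    rw [card_pair (ne_of_mem_erase hy).symm] at this
    have := hF hA.1.1 hB.1.1 hAB
    omega
  calc #{A ∈ F | x ∈ A} * (k - 1) = ∑ A ∈ {A ∈ F | x ∈ A}, #(univ.erase x ∩ A) := by
        rw [sum_congr rfl fun A hA => ?_, sum_const, smul_eq_mul]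
        rw [mem_filter] at hA
        rw [erase_inter, univ_inter, card_erase_of_mem hA.2, hk A hA.1]
    _ ≤ #(univ.erase x) * 1 := sum_card_inter_le hunique
    _ = Fintype.card α - 1 := by rw [mul_one, card_erase_of_mem (mem_univ x), card_univ]

theorem three_mul_card_lt_choose_two_of_mod_six_eq_five (hF : IsLinearFamily F)
    (h3 : ∀ A ∈ F, #A = 3) (h5 : Fintype.card α % 6 = 5) :
    3 * #F < (Fintype.card α).choose 2 := by
  have hpairs := hF.card_mul_choose_two_le h3
  rw [show (3 : ℕ).choose 2 = 3 from rfl] at hpairs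
  -- pair counting cannot be tight, since `(Fintype.card α).choose 2 ≡ 1 [MOD 3]`
  obtain ⟨j, hj⟩ : ∃ j, Fintype.card α = 6 * j + 5 := ⟨Fintype.card α / 6, by omega⟩
  have : (Fintype.card α).choose 2 * 2 = 6 * (6 * j ^ 2 + 9 * j + 3) + 2 := by
    rw [Nat.choose_two_mul_two, hj, show 6 * j + 5 - 1 = 6 * j + 4 by omega]; ring
  omega

theorem three_mul_card_lt_choose_two_of_even (hF : IsLinearFamily F) (h3 : ∀ A ∈ F, #A = 3)
    (hα : 0 < Fintype.card α) (heven : Even (Fintype.card α)) :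
    3 * #F < (Fintype.card α).choose 2 := by
  have htwo := heven.two_dvd
  have hdeg : ∀ x, #{A ∈ F | x ∈ A} ≤ (Fintype.card α - 2) / 2 := fun x => by
    have := hF.card_filter_mem_mul_le h3 x
    omega
  have hsum : 3 * #F ≤ Fintype.card α * ((Fintype.card α - 2) / 2) :=
    calc 3 * #F = ∑ A ∈ F, #A := by rw [sum_congr rfl h3, sum_const, smul_eq_mul, mul_comm]
      _ ≤ Fintype.card α * ((Fintype.card α - 2) / 2) := sum_card_le hdeg
  have hhalf : (Fintype.card α - 2) / 2 * 2 < Fintype.card α - 1 := by omega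
  have := Nat.mul_lt_mul_of_pos_left hhalf hα
  rw [← mul_assoc, ← Nat.choose_two_mul_two] at this
  omega

end IsLinearFamily

theorem SimpleGraph.Colorable.card_le_mul_indepNum {V : Type*} [Fintype V] {G : SimpleGraph V}
    {m : ℕ} (hG : G.Colorable m) : Fintype.card V ≤ m * G.indepNum := by
  classical
  obtain ⟨C⟩ := hG
  have hclass : ∀ c, G.IsIndepSet ({v | C v = c} : Finset V) := fun c v hv w hw _ hadj =>
    C.valid hadj (by simp_all)
  calc Fintype.card V = ∑ c, #({v | C v = c} : Finset V) :=
        card_eq_sum_card_fiberwise fun v _ => mem_univ (C v)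
    _ ≤ ∑ _c : Fin m, G.indepNum := sum_le_sum fun c _ => (hclass c).card_le_indepNum
    _ = m * G.indepNum := by simp

theorem isLinearFamily_map_of_isIndepSet_distGraph {n : ℕ}
    {s : Finset {A : Finset (Fin n) // #A = 3}} (hs : (distGraph n 3 2).IsIndepSet s) :
    IsLinearFamily (s.map (Function.Embedding.subtype _)) := by
  rintro _ hA _ hB hAB
  obtain ⟨A, hAs, rfl⟩ := mem_map.1 hA
  obtain ⟨B, hBs, rfl⟩ := mem_map.1 hB
  have hne : A ≠ B := fun h => hAB (h ▸ rfl)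
  have hnot2 : #(A.1 ∩ B.1) ≠ 2 := fun h => hs hAs hBs hne ⟨hne, h⟩
  have hlt3 : #(A.1 ∩ B.1) < 3 :=
    calc #(A.1 ∩ B.1) < #A.1 := card_lt_card <| ssubset_of_subset_of_ne inter_subset_left
          fun h => hne <| Subtype.ext <|
            eq_of_subset_of_card_le (h ▸ inter_subset_right) (by rw [A.2, B.2])
      _ = 3 := A.2
  simp only [Function.Embedding.subtype_apply]
  omega

theorem three_mul_indepNum_distGraph_lt_choose_two {n : ℕ} (hn : 0 < n)
    (hmod : n % 6 = 0 ∨ n % 6 = 2 ∨ n % 6 = 4 ∨ n % 6 = 5) :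
    3 * (distGraph n 3 2).indepNum < n.choose 2 := by
  obtain ⟨s, hs⟩ := (distGraph n 3 2).exists_isNIndepSet_indepNum
  have hF := isLinearFamily_map_of_isIndepSet_distGraph hs.isIndepSet
  have h3 : ∀ A ∈ s.map (Function.Embedding.subtype _), #A = 3 := fun A hA => by
    obtain ⟨A, -, rfl⟩ := mem_map.1 hA
    exact A.2
  suffices 3 * #(s.map (Function.Embedding.subtype _)) < (Fintype.card (Fin n)).choose 2 by
    rwa [card_map, hs.card_eq, Fintype.card_fin] at this
  by_cases h5 : n % 6 = 5
  · exact hF.three_mul_card_lt_choose_two_of_mod_six_eq_five h3 (by simpa using h5)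
  · exact hF.three_mul_card_lt_choose_two_of_even h3 (by simpa using hn)
      (by rw [Fintype.card_fin, Nat.even_iff]; omega)

theorem stmt_6 (n : ℕ) (hn : 3 ≤ n)
    (hmod : n % 6 = 0 ∨ n % 6 = 2 ∨ n % 6 = 4 ∨ n % 6 = 5) :
    ((n - 1 : ℕ) : ℕ∞) ≤ (distGraph n 3 2).chromaticNumber := by
  rw [SimpleGraph.le_chromaticNumber_iff_colorable]
  intro m hm
  have hcard : n.choose 3 ≤ m * (distGraph n 3 2).indepNum := by
    simpa [Fintype.card_finset_len] using hm.card_le_mul_indepNum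
  have hindep := three_mul_indepNum_distGraph_lt_choose_two (by omega) hmod
  suffices n - 2 < m by exact_mod_cast (by omega : n - 1 ≤ m)
  refine Nat.lt_of_mul_lt_mul_right (a := 3 * (distGraph n 3 2).indepNum) ?_
  calc (n - 2) * (3 * (distGraph n 3 2).indepNum) < (n - 2) * n.choose 2 :=
        Nat.mul_lt_mul_of_pos_left hindep (by omega)
    _ = n.choose 3 * 3 := by rw [Nat.choose_succ_right_eq n 2, mul_comm]
    _ ≤ m * (3 * (distGraph n 3 2).indepNum) := by linarith
end

section
/- Let n be a prime number and let r, s be integers with 0 ≤ s < r ≤ n. Then the chromatic number of G(n, r, s) satisfies χ(G(n, r, s)) ≤ n^{r−s}. -/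
open Polynomial Finset Lagrange

section Nodal

variable {α F : Type*} [Field F]

theorem Lagrange.roots_nodal_embedding (ι : α ↪ F) (S : Finset α) :
    (nodal S ι).roots = (S.map ι).val := by
  rw [nodal_eq, ← prod_map S ι (fun x => X - C x), roots_prod_X_sub_C]

theorem Lagrange.nodal_injective (ι : α ↪ F) : Function.Injective fun S : Finset α => nodal S ι :=
  fun S T hST => map_injective ι <| val_injective <| by
    rw [← roots_nodal_embedding, ← roots_nodal_embedding]
    exact congrArg roots hST

theorem Lagrange.eq_of_coeff_nodal_eq [DecidableEq α] {ι : α ↪ F} {S T : Finset α} {r s : ℕ}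
    (hS : #S = r) (hT : #T = r) (hST : s ≤ #(S ∩ T))
    (hcoeff : ∀ k, s ≤ k → k < r → (nodal S ι).coeff k = (nodal T ι).coeff k) : S = T := by
  have hdeg : (nodal S ι - nodal T ι).degree < #((S ∩ T).map ι) := by
    rw [card_map, degree_lt_iff_coeff_zero]
    intro m hm
    rw [coeff_sub, sub_eq_zero]
    rcases lt_trichotomy m r with hmr | rfl | hmr
    · exact hcoeff m (hST.trans hm) hmr
    · have hlead (U : Finset α) : (nodal U ι).coeff #U = 1 := by
        rw [← natDegree_nodal (v := ι)]
        exact nodal_monic.coeff_natDegree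
      rw [← hS, hlead, hS, ← hT, hlead]
    · rw [coeff_eq_zero_of_natDegree_lt (by rwa [natDegree_nodal, hS]),
        coeff_eq_zero_of_natDegree_lt (by rwa [natDegree_nodal, hT])]
  refine nodal_injective ι (eq_of_degree_sub_lt_of_eval_finset_eq _ hdeg ?_)
  intro x hx
  obtain ⟨a, ha, rfl⟩ := mem_map.1 hx
  rw [eval_nodal_at_node (mem_inter.1 ha).1, eval_nodal_at_node (mem_inter.1 ha).2]

end Nodal

noncomputable def distGraph.nodalColoring {F : Type*} [Field F] {n r s : ℕ} (ι : Fin n ↪ F) :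
    (distGraph n r s).Coloring (Fin (r - s) → F) :=
  SimpleGraph.Coloring.mk (fun A i => (nodal A.1 ι).coeff (s + i)) fun {A B} hAB hcol =>
    hAB.1 <| Subtype.ext <| eq_of_coeff_nodal_eq A.2 B.2 hAB.2.ge fun k hsk hkr => by
      simpa [Nat.add_sub_cancel' hsk] using congrFun hcol (⟨k - s, by omega⟩ : Fin (r - s))

theorem distGraph_colorable_of_embedding {F : Type*} [Field F] [Fintype F] {n r s : ℕ}
    (ι : Fin n ↪ F) : (distGraph n r s).Colorable (Fintype.card F ^ (r - s)) := by
  simpa using (distGraph.nodalColoring ι).colorable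

theorem stmt_7_general (n r s : ℕ) (hn : n.Prime) :
    (distGraph n r s).chromaticNumber ≤ ((n ^ (r - s) : ℕ) : ℕ∞) := by
  have := Fact.mk hn
  have hcol := distGraph_colorable_of_embedding (r := r) (s := s)
    (ZMod.finEquiv n).toEquiv.toEmbedding
  rw [ZMod.card] at hcol
  exact hcol.chromaticNumber_le

theorem stmt_7 (n r s : ℕ) (hn : n.Prime) (hs : s < r) (hr : r ≤ n) :
    (distGraph n r s).chromaticNumber ≤ ((n ^ (r - s) : ℕ) : ℕ∞) :=
  stmt_7_general n r s hn
end

section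
/- Let p > 3 be a prime such that for every natural number r the congruence 2^r ≡ −1 (mod p) fails. Then there exist two functions f₁, f₂ defined on all unordered pairs {x, y} of distinct elements of Z_p, with values in Z_p, such that: (1) for each i ∈ {1, 2} and each pair, f_i(x, y) = f_i(y, x) ∈ {x, y}; (2) f₁(x, y) ≠ f₂(x, y) for every pair of distinct x, y; and (3) there is no pair of distinct elements x, y and no i ∈ {1, 2} such that simultaneously f_i(x, y) = x and f_i((x+y)/2, x) = (x+y)/2, where (x+y)/2 denotes (x+y)·2⁻¹ computed in the field Z_p. -/
/-!
Orient every pair `{d, -d}` of nonzero elements of `Z_p` by a set `Q` containing exactly one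
of them, chosen so that `Q` is stable under halving, and let `f₁ x y` be `x` when `y - x ∈ Q`
and `y` otherwise; `f₂` does the same with the complement of `Q`. A violation of (3) would give
`y - x ∈ Q` together with `x - (x + y)/2 = (x - y)/2 ∈ Q`, i.e. both `y - x` and `x - y` in `Q`.
Such a `Q` is a union of cosets of the subgroup `⟨2⟩` of `Z_pˣ`, which exists because
multiplication by `-1` is a fixed-point-free involution on the cosets exactly when `-1 ∉ ⟨2⟩`.
-/

open Function

theorem Function.Involutive.exists_set_apply_mem_iff_notMem_s8 {α : Type*} {σ : α → α}
    (hσ : Involutive σ) (hfix : ∀ a, σ a ≠ a) : ∃ T : Set α, ∀ a, σ a ∈ T ↔ a ∉ T := by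
  obtain ⟨_, _⟩ := exists_wellFoundedLT α
  refine ⟨{a | a < σ a}, fun a => ?_⟩
  simp only [Set.mem_ofPred_eq, hσ a, not_lt]
  exact (hfix a).le_iff_lt.symm

theorem Subgroup.exists_set_mul_mem_iff_notMem {G : Type*} [CommGroup G] {H : Subgroup G}
    {c : G} (hc : c ∉ H) (hcc : c * c ∈ H) :
    ∃ S : Set G, (∀ g, ∀ h ∈ H, g * h ∈ S ↔ g ∈ S) ∧ ∀ g, g * c ∈ S ↔ g ∉ S := by
  have hinv : Involutive (· * (c : G ⧸ H)) := fun x => by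
    change x * c * c = x
    rw [mul_assoc, ← QuotientGroup.mk_mul, (QuotientGroup.eq_one_iff _).2 hcc, mul_one]
  have hfix : ∀ x : G ⧸ H, x * c ≠ x := fun x h =>
    hc ((QuotientGroup.eq_one_iff c).1 (mul_eq_left.1 h))
  obtain ⟨T, hT⟩ := hinv.exists_set_apply_mem_iff_notMem_s8 hfix
  refine ⟨(↑) ⁻¹' T, fun g h hh => ?_, fun g => ?_⟩ <;>
    simp only [Set.mem_preimage, QuotientGroup.mk_mul]
  · rw [(QuotientGroup.eq_one_iff h).2 hh, mul_one]
  · exact hT g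

theorem forall_zpow_ne_of_forall_pow_ne {G₀ : Type*} [GroupWithZero G₀] [Finite G₀] {a b : G₀}
    (ha : a ≠ 0) (h : ∀ n : ℕ, a ^ n ≠ b) (n : ℤ) : a ^ n ≠ b := by
  obtain ⟨m, hm⟩ := mem_powers_iff_mem_zpowers.2 (Subgroup.zpow_mem_zpowers (Units.mk0 a ha) n)
  have ham : a ^ m = a ^ n := by simpa using congrArg Units.val hm
  exact ham ▸ h m

section Field

variable {F : Type*} [Field F]

structure HalvingStableOrientation (Q : Set F) : Prop where
  neg_mem_iff : ∀ {d : F}, d ≠ 0 → (-d ∈ Q ↔ d ∉ Q)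
  mul_inv_two_mem_iff : ∀ d : F, d * 2⁻¹ ∈ Q ↔ d ∈ Q

theorem HalvingStableOrientation.compl {Q : Set F} (hQ : HalvingStableOrientation Q) :
    HalvingStableOrientation Qᶜ where
  neg_mem_iff hd := by simp only [Set.mem_compl_iff, hQ.neg_mem_iff hd]
  mul_inv_two_mem_iff d := by simp only [Set.mem_compl_iff, hQ.mul_inv_two_mem_iff]

theorem exists_halvingStableOrientation (h : ∀ n : ℤ, (2 : F) ^ n ≠ -1) :
    ∃ Q : Set F, HalvingStableOrientation Q := by
  have h2 : (2 : F) ≠ 0 := fun h2 => h 0 (by linear_combination h2)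
  have hc : (-1 : Fˣ) ∉ Subgroup.zpowers (Units.mk0 2 h2) := by
    rintro ⟨n, hn⟩
    exact h n (by simpa using congrArg Units.val hn)
  obtain ⟨S, hH, hneg⟩ := Subgroup.exists_set_mul_mem_iff_notMem hc (by simp)
  have hval : ∀ {d : F} (hd : d ≠ 0), d ∈ Units.val '' S ↔ Units.mk0 d hd ∈ S := fun hd => by
    conv_lhs => rw [← Units.val_mk0 hd]
    exact Units.val_injective.mem_set_image
  refine ⟨Units.val '' S, fun hd => ?_, fun d => ?_⟩
  · rw [hval hd, hval (neg_ne_zero.2 hd), ← hneg]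
    exact Iff.of_eq (congrArg (· ∈ S) (Units.ext (by simp)))
  · rcases eq_or_ne d 0 with rfl | hd
    · rw [zero_mul]
    rw [hval hd, hval (mul_ne_zero hd (inv_ne_zero h2)),
      ← hH _ _ (Subgroup.mem_zpowers (Units.mk0 2 h2))]
    exact Iff.of_eq (congrArg (· ∈ S) (Units.ext (by simp [h2])))

open scoped Classical in
noncomputable def pick (Q : Set F) (x y : F) : F := if y - x ∈ Q then x else y

theorem pick_mem_pair (Q : Set F) (x y : F) : pick Q x y ∈ ({x, y} : Set F) := by
  unfold pick; split_ifs <;> simp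

theorem pick_eq_left_iff {Q : Set F} {x y : F} (hxy : x ≠ y) : pick Q x y = x ↔ y - x ∈ Q := by
  unfold pick; split_ifs with h <;> simp [h, hxy.symm]

theorem pick_comm {Q : Set F} (hQ : HalvingStableOrientation Q) {x y : F} (hxy : x ≠ y) :
    pick Q x y = pick Q y x := by
  have hflip : x - y ∈ Q ↔ y - x ∉ Q := by
    rw [← neg_sub, hQ.neg_mem_iff (sub_ne_zero.2 hxy.symm)]
  unfold pick; split_ifs <;> tauto

theorem pick_ne_pick_compl (Q : Set F) {x y : F} (hxy : x ≠ y) : pick Q x y ≠ pick Qᶜ x y := by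
  unfold pick; split_ifs <;> simp_all [hxy.symm]

theorem not_pick_eq_left_and_pick_midpoint_eq_left {Q : Set F} (hQ : HalvingStableOrientation Q)
    (h2 : (2 : F) ≠ 0) {x y : F} (hxy : x ≠ y) :
    ¬ (pick Q x y = x ∧ pick Q ((x + y) * 2⁻¹) x = (x + y) * 2⁻¹) := by
  have hmx : (x + y) * 2⁻¹ ≠ x := fun h => hxy (by field_simp at h; linear_combination -h)
  have hsub : x - (x + y) * 2⁻¹ = (x - y) * 2⁻¹ := by field_simp; ring
  rw [pick_eq_left_iff hxy, pick_eq_left_iff hmx, hsub, hQ.mul_inv_two_mem_iff, ← neg_sub x y,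
    hQ.neg_mem_iff (sub_ne_zero.2 hxy)]
  tauto

end Field

theorem stmt_8_general (p : ℕ) (hp : p.Prime)
    (h2 : ∀ r : ℕ, (2 : ZMod p) ^ r ≠ -1) :
    ∃ f₁ f₂ : ZMod p → ZMod p → ZMod p,
      (∀ x y : ZMod p, x ≠ y →
        f₁ x y = f₁ y x ∧ f₁ x y ∈ ({x, y} : Set (ZMod p)) ∧
        f₂ x y = f₂ y x ∧ f₂ x y ∈ ({x, y} : Set (ZMod p))) ∧
      (∀ x y : ZMod p, x ≠ y → f₁ x y ≠ f₂ x y) ∧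
      (¬ ∃ (x y : ZMod p), x ≠ y ∧
        ((f₁ x y = x ∧ f₁ ((x + y) * 2⁻¹) x = (x + y) * 2⁻¹) ∨
         (f₂ x y = x ∧ f₂ ((x + y) * 2⁻¹) x = (x + y) * 2⁻¹))) := by
  have := Fact.mk hp
  have h2ne : (2 : ZMod p) ≠ 0 := fun h => h2 0 (by linear_combination h)
  obtain ⟨Q, hQ⟩ := exists_halvingStableOrientation (forall_zpow_ne_of_forall_pow_ne h2ne h2)
  refine ⟨pick Q, pick Qᶜ, fun x y hxy => ⟨pick_comm hQ hxy, pick_mem_pair Q x y,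
    pick_comm hQ.compl hxy, pick_mem_pair Qᶜ x y⟩, fun x y hxy => pick_ne_pick_compl Q hxy, ?_⟩
  rintro ⟨x, y, hxy, h | h⟩
  exacts [not_pick_eq_left_and_pick_midpoint_eq_left hQ h2ne hxy h,
    not_pick_eq_left_and_pick_midpoint_eq_left hQ.compl h2ne hxy h]

theorem stmt_8 (p : ℕ) (hp : p.Prime) (hp3 : 3 < p)
    (h2 : ∀ r : ℕ, (2 : ZMod p) ^ r ≠ -1) :
    ∃ f₁ f₂ : ZMod p → ZMod p → ZMod p,
      (∀ x y : ZMod p, x ≠ y →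
        f₁ x y = f₁ y x ∧ f₁ x y ∈ ({x, y} : Set (ZMod p)) ∧
        f₂ x y = f₂ y x ∧ f₂ x y ∈ ({x, y} : Set (ZMod p))) ∧
      (∀ x y : ZMod p, x ≠ y → f₁ x y ≠ f₂ x y) ∧
      (¬ ∃ (x y : ZMod p), x ≠ y ∧
        ((f₁ x y = x ∧ f₁ ((x + y) * 2⁻¹) x = (x + y) * 2⁻¹) ∨
         (f₂ x y = x ∧ f₂ ((x + y) * 2⁻¹) x = (x + y) * 2⁻¹))) :=
  stmt_8_general p hp h2
end

section
/- Let p be an odd prime, let i and j be distinct elements of Z_p, and define f : Z_p → Z_p by f(x) = (x + i)·2⁻¹. Then the least positive integer m such that the m-fold iterate f^m(j) equals j is exactly the multiplicative order of 2 modulo p. -/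
/-!
The map `x ↦ (x + i)/2` fixes `i` and halves the displacement from it, so
`f^[m] j - i = 2⁻ᵐ (j - i)`. As `j ≠ i`, `j` returns to itself after `m` steps exactly when
`2ᵐ = 1`, and the least such `m > 0` is the order of the unit `2`.
-/

theorem iterate_mul_sub_add {R : Type*} [Ring R] (a c x : R) (m : ℕ) :
    (fun y => a * (y - c) + c)^[m] x = a ^ m * (x - c) + c := by
  induction m with
  | zero => simp
  | succ m ih => rw [Function.iterate_succ_apply', ih, add_sub_cancel_right, pow_succ', mul_assoc]

theorem iterate_mul_sub_add_eq_self_iff {R : Type*} [Ring R] [NoZeroDivisors R] {a c x : R}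
    (hx : x ≠ c) (m : ℕ) : (fun y => a * (y - c) + c)^[m] x = x ↔ a ^ m = 1 := by
  rw [iterate_mul_sub_add, ← eq_sub_iff_add_eq, ← sub_eq_zero, ← sub_one_mul,
    mul_eq_zero, sub_eq_zero, or_iff_left (sub_ne_zero.mpr hx)]

theorem IsOfFinOrder.isLeast_orderOf {M : Type*} [Monoid M] {a : M} (ha : IsOfFinOrder a) :
    IsLeast {m : ℕ | 0 < m ∧ a ^ m = 1} (orderOf a) :=
  ⟨⟨ha.orderOf_pos, pow_orderOf_eq_one a⟩, fun _ ⟨hm, ham⟩ => orderOf_le_of_pow_eq_one hm ham⟩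

theorem ZMod.two_ne_zero_of_odd {p : ℕ} (hp : p.Prime) (hodd : Odd p) : (2 : ZMod p) ≠ 0 := by
  intro h
  have h2p : p ∣ 2 := (ZMod.natCast_eq_zero_iff 2 p).mp (by exact_mod_cast h)
  rw [(Nat.prime_dvd_prime_iff_eq hp Nat.prime_two).mp h2p] at hodd
  exact Nat.not_odd_iff_even.mpr even_two hodd

theorem stmt_9 (p : ℕ) (hp : p.Prime) (hodd : Odd p) (i j : ZMod p) (hij : i ≠ j) :
    IsLeast {m : ℕ | 0 < m ∧ (fun x : ZMod p => (x + i) * 2⁻¹)^[m] j = j}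
      (orderOf (2 : ZMod p)) := by
  have : Fact p.Prime := ⟨hp⟩
  have h2 := ZMod.two_ne_zero_of_odd hp hodd
  have hf : (fun x : ZMod p => (x + i) * 2⁻¹) = fun x => 2⁻¹ * (x - i) + i := by
    funext x
    field_simp
    ring
  have hperiod (m : ℕ) :
      (fun x : ZMod p => (x + i) * 2⁻¹)^[m] j = j ↔ (2 : ZMod p) ^ m = 1 := by
    rw [hf, iterate_mul_sub_add_eq_self_iff hij.symm, inv_pow, inv_eq_one]
  simp_rw [hperiod]
  exact (isOfFinOrder_iff_isUnit.mpr (Ne.isUnit h2)).isLeast_orderOf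
end

section
/- Let p > 3 be a prime such that for every natural number r the congruence 2^r ≡ −1 (mod p) fails. Then there exists a function g : Z_p × Z_p → {0, 1} such that for all distinct i, j ∈ Z_p: (1) g(i, j) = g(i, (j + i)·2⁻¹), i.e., g(i, ·) is constant along each orbit of the map x ↦ (x + i)·2⁻¹; and (2) g(i, j) ≠ g(j, i). -/
/-!
Put `g i j := c (j - i)`. Since `(j + i) * 2⁻¹ - i = (j - i) * 2⁻¹`, condition (1) asks for `c`
to be constant on the orbits of multiplication by `2`, and condition (2) asks for `c (-d) ≠ c d`
for `d ≠ 0`.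
Negation descends to an involution on these orbits, and it fixes the orbit of `d ≠ 0` only if
`2 ^ k * d = -d` for some `k`, i.e. only if some power of `2` is `-1`. Any involution can be
2-coloured so that it swaps the colours of every point it moves: well-order the type and colour `x`
by whether `x < σ x`.
-/

open MulAction

theorem Function.Involutive.exists_fin_two_apply_ne {α : Type*} {σ : α → α}
    (hσ : Function.Involutive σ) : ∃ f : α → Fin 2, ∀ x, σ x ≠ x → f (σ x) ≠ f x := by
  classical
  let := IsWellOrder.linearOrder (WellOrderingRel (α := α))
  refine ⟨fun x => if x < σ x then 0 else 1, fun x hx => ?_⟩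
  rcases lt_or_gt_of_ne hx with h | h <;> simp [hσ x, h, not_lt_of_gt h]

namespace MulAction.orbitRel.Quotient

variable {G α : Type*} [Group G] [AddGroup α] [DistribMulAction G α]

instance : InvolutiveNeg (orbitRel.Quotient G α) where
  neg := Quotient.map Neg.neg fun a b ⟨g, hg⟩ => ⟨g, by simp only [← hg, smul_neg]⟩
  neg_neg q := Quotient.inductionOn q fun a => congrArg _ (neg_neg a)

theorem neg_mk (a : α) : -(⟦a⟧ : orbitRel.Quotient G α) = ⟦-a⟧ := rfl

theorem neg_mk_ne_mk_of_pow_ne_neg_one {K : Type*} [Field K] {u : Kˣ}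
    (hu : ∀ n : ℕ, (u : K) ^ n ≠ -1) {x : K} (hx : x ≠ 0) :
    -(⟦x⟧ : orbitRel.Quotient (Subgroup.zpowers u) K) ≠ ⟦x⟧ := by
  rw [neg_mk]
  intro h
  obtain ⟨⟨_, k, rfl⟩, hk⟩ := Quotient.exact h
  have hk : (u : K) ^ k = -1 := by
    apply mul_right_cancel₀ hx
    rw [neg_one_mul, ← hk]
    simp only [Subgroup.smul_def, Units.smul_def, Units.val_zpow_eq_zpow_val, smul_eq_mul]
  -- `u ^ (-k) = (u ^ k)⁻¹ = -1` too, so some natural power of `u` is `-1`.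
  rcases Int.natAbs_eq k with hk' | hk' <;> rw [hk'] at hk
  · exact hu _ (by rwa [zpow_natCast] at hk)
  · exact hu _ (by rwa [zpow_neg, zpow_natCast, inv_eq_iff_eq_inv, inv_neg, inv_one] at hk)

end MulAction.orbitRel.Quotient

theorem stmt_11_general (p : ℕ) (hp : p.Prime)
    (h2 : ∀ r : ℕ, (2 : ZMod p) ^ r ≠ -1) :
    ∃ g : ZMod p → ZMod p → Fin 2,
      ∀ i j : ZMod p, i ≠ j →
        g i j = g i ((j + i) * 2⁻¹) ∧ g i j ≠ g j i := by
  have := Fact.mk hp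
  have htwo : (2 : ZMod p) ≠ 0 :=
    Ring.two_ne_zero fun h => h2 0 (by rw [pow_zero, neg_one_eq_one_iff.mpr h])
  let u := Units.mk0 (2 : ZMod p) htwo
  obtain ⟨c, hc⟩ :=
    (neg_involutive (G := orbitRel.Quotient (Subgroup.zpowers u) (ZMod p))).exists_fin_two_apply_ne
  refine ⟨fun i j => c ⟦j - i⟧, fun i j hij =>
    ⟨congrArg c (Quotient.sound ⟨⟨u, Subgroup.mem_zpowers u⟩, ?_⟩), ?_⟩⟩
  · change u • ((j + i) * 2⁻¹ - i) = j - i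
    rw [Units.smul_def, Units.val_mk0, smul_eq_mul, mul_sub, mul_left_comm, mul_inv_cancel₀ htwo]
    ring
  · dsimp only
    rw [← neg_sub j i, ← orbitRel.Quotient.neg_mk]
    have hji : j - i ≠ 0 := sub_ne_zero.mpr hij.symm
    exact (hc _ (orbitRel.Quotient.neg_mk_ne_mk_of_pow_ne_neg_one h2 hji)).symm

theorem stmt_11 (p : ℕ) (hp : p.Prime) (hp3 : 3 < p)
    (h2 : ∀ r : ℕ, (2 : ZMod p) ^ r ≠ -1) :
    ∃ g : ZMod p → ZMod p → Fin 2,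
      ∀ i j : ZMod p, i ≠ j →
        g i j = g i ((j + i) * 2⁻¹) ∧ g i j ≠ g j i :=
  stmt_11_general p hp h2
end

section
/- There are infinitely many primes p such that for every natural number r, 2^r is not congruent to −1 modulo p. -/
/-!
For a prime `p ≡ 7 (mod 8)` the second supplement to quadratic reciprocity makes `2` a square
mod `p`, while `p ≡ 3 (mod 4)` makes `-1` a non-square. Every power of a square is a square, so
no power of `2` is `-1` mod `p`, and Dirichlet's theorem supplies infinitely many such primes.
-/

theorem IsSquare.pow_ne_of_not_isSquare {M : Type*} [Monoid M] {a b : M} (ha : IsSquare a)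
    (hb : ¬IsSquare b) (r : ℕ) : a ^ r ≠ b :=
  fun h => hb (h ▸ ha.pow r)

theorem ZMod.two_pow_ne_neg_one_of_mod_eight_eq_seven {p : ℕ} [Fact p.Prime] (hp : p % 8 = 7)
    (r : ℕ) : (2 : ZMod p) ^ r ≠ -1 := by
  have two_isSquare : IsSquare (2 : ZMod p) :=
    (ZMod.exists_sq_eq_two_iff (by omega)).2 (Or.inr hp)
  have neg_one_not_isSquare : ¬IsSquare (-1 : ZMod p) := by
    rw [ZMod.exists_sq_eq_neg_one_iff]
    omega
  exact two_isSquare.pow_ne_of_not_isSquare neg_one_not_isSquare r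

theorem stmt_13 :
    {p : ℕ | p.Prime ∧ ∀ r : ℕ, (2 : ZMod p) ^ r ≠ -1}.Infinite := by
  refine (Nat.infinite_setOfPred_prime_and_modEq (q := 8) (a := 7) (by norm_num)
    (by norm_num)).mono ?_
  rintro p ⟨hp, hmod⟩
  have := Fact.mk hp
  exact ⟨hp, ZMod.two_pow_ne_neg_one_of_mod_eight_eq_seven hmod⟩
end

section
/- Let n ≥ r ≥ 2 be integers and let W be an independent set of vertices in the graph G(n, r, r−1). Then |W| · C(r, 2) ≤ ⌊(n − r + 2)/2⌋ · C(n, r − 2), where C(a, b) denotes the binomial coefficient. -/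
open Finset

namespace Finset

variable {α : Type*} [DecidableEq α]

theorem card_inter_lt_of_ne_of_card_eq {A B : Finset α} (hAB : A ≠ B) (hcard : #A = #B) :
    #(A ∩ B) < #A :=
  card_lt_card ⟨inter_subset_left, fun hA ↦
    hAB (eq_of_subset_of_card_le (hA.trans inter_subset_right) hcard.ge)⟩

theorem inter_eq_of_card_inter_ne {T A B : Finset α} (hTA : T ⊆ A) (hTB : T ⊆ B)
    (hA : #A = #T + 2) (hB : #B = #A) (hAB : A ≠ B) (hinter : #(A ∩ B) ≠ #T + 1) :
    A ∩ B = T := by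
  have hlt := card_inter_lt_of_ne_of_card_eq hAB hB.symm
  exact (eq_of_subset_of_card_le (subset_inter hTA hTB) (by omega)).symm

theorem card_filter_subset_powersetCard (s A : Finset α) (k : ℕ) :
    #((s.powersetCard k).filter (· ⊆ A)) = (#(s ∩ A)).choose k := by
  rw [← card_powersetCard]
  congr 1
  ext T
  simp only [mem_filter, mem_powersetCard, subset_inter_iff]
  tauto

variable [Fintype α]

theorem card_mul_le_of_pairwise_inter_eq (T : Finset α) (𝒜 : Finset (Finset α)) (d : ℕ)
    (hT : ∀ A ∈ 𝒜, T ⊆ A) (hcard : ∀ A ∈ 𝒜, #A = #T + d)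
    (hinter : (𝒜 : Set (Finset α)).Pairwise fun A B ↦ A ∩ B = T) :
    #𝒜 * d ≤ Fintype.card α - #T := by
  have hdisj : (𝒜 : Set (Finset α)).PairwiseDisjoint (· \ T) := by
    intro A hA B hB hAB
    rw [Function.onFun, disjoint_left]
    intro x hxA hxB
    have hx : x ∈ A ∩ B := mem_inter.2 ⟨(mem_sdiff.1 hxA).1, (mem_sdiff.1 hxB).1⟩
    rw [hinter hA hB hAB] at hx
    exact (mem_sdiff.1 hxA).2 hx
  calc #𝒜 * d = ∑ A ∈ 𝒜, #(A \ T) := by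
        rw [sum_congr rfl fun A hA ↦ by rw [card_sdiff_of_subset (hT A hA), hcard A hA,
          Nat.add_sub_cancel_left], sum_const, smul_eq_mul]
    _ = #(𝒜.biUnion (· \ T)) := (card_biUnion hdisj).symm
    _ ≤ #(univ \ T) := card_le_card <| biUnion_subset.2 fun A _ ↦ sdiff_subset_sdiff
        (subset_univ A) le_rfl
    _ = Fintype.card α - #T := card_univ_sdiff T

variable {r : ℕ} {𝒜 : Finset (Finset α)}

theorem card_filter_superset_le (hr : 2 ≤ r) (h𝒜 : ∀ A ∈ 𝒜, #A = r)
    (hinter : (𝒜 : Set (Finset α)).Pairwise fun A B ↦ #(A ∩ B) ≠ r - 1)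
    {T : Finset α} (hT : #T = r - 2) :
    #(𝒜.filter (T ⊆ ·)) ≤ (Fintype.card α - r + 2) / 2 := by
  have hcard : ∀ A ∈ 𝒜.filter (T ⊆ ·), #A = #T + 2 := fun A hA ↦ by
    rw [h𝒜 A (mem_filter.1 hA).1]; omega
  have hsunflower : #(𝒜.filter (T ⊆ ·)) * 2 ≤ Fintype.card α - #T := by
    refine card_mul_le_of_pairwise_inter_eq T _ 2 (fun A hA ↦ (mem_filter.1 hA).2) hcard ?_
    intro A hA B hB hAB
    rw [mem_coe, mem_filter] at hA hB
    refine inter_eq_of_card_inter_ne hA.2 hB.2 (hcard A (mem_filter.2 hA)) ?_ hAB ?_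
    · rw [h𝒜 A hA.1, h𝒜 B hB.1]
    · have := hinter hA.1 hB.1 hAB
      omega
  rw [Nat.le_div_iff_mul_le two_pos]
  omega

theorem card_mul_choose_two_le (hr : 2 ≤ r) (h𝒜 : ∀ A ∈ 𝒜, #A = r)
    (hinter : (𝒜 : Set (Finset α)).Pairwise fun A B ↦ #(A ∩ B) ≠ r - 1) :
    #𝒜 * r.choose 2 ≤ (Fintype.card α - r + 2) / 2 * (Fintype.card α).choose (r - 2) := by
  calc #𝒜 * r.choose 2
      ≤ #(univ.powersetCard (r - 2)) * ((Fintype.card α - r + 2) / 2) := by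
        refine card_mul_le_card_mul (fun A T ↦ T ⊆ A) (fun A hA ↦ ?_) fun T hT ↦ ?_
        · rw [bipartiteAbove, card_filter_subset_powersetCard, univ_inter, h𝒜 A hA,
            Nat.choose_symm hr]
        · exact card_filter_superset_le hr h𝒜 hinter (mem_powersetCard.1 hT).2
    _ = _ := by rw [card_powersetCard, card_univ, mul_comm]

end Finset

theorem stmt_14_general (n r : ℕ) (hr : 2 ≤ r)
    (W : Finset {A : Finset (Fin n) // A.card = r})
    (hW : ∀ a ∈ W, ∀ b ∈ W, ¬ (distGraph n r (r - 1)).Adj a b) :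
    W.card * r.choose 2 ≤ ((n - r + 2) / 2) * n.choose (r - 2) := by
  have key := card_mul_choose_two_le (𝒜 := W.map (Function.Embedding.subtype _)) hr
    (by simp only [mem_map, Function.Embedding.subtype_apply]; rintro _ ⟨A, -, rfl⟩; exact A.2)
    (by
      rintro _ hA _ hB hAB
      simp only [coe_map, Set.mem_image, mem_coe, Function.Embedding.subtype_apply] at hA hB
      obtain ⟨A, hA, rfl⟩ := hA
      obtain ⟨B, hB, rfl⟩ := hB
      exact fun h ↦ hW A hA B hB ⟨fun hAB' ↦ hAB (congrArg Subtype.val hAB'), h⟩)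
  simpa only [card_map, Fintype.card_fin] using key

theorem stmt_14 (n r : ℕ) (hr : 2 ≤ r) (hn : r ≤ n)
    (W : Finset {A : Finset (Fin n) // A.card = r})
    (hW : ∀ a ∈ W, ∀ b ∈ W, ¬ (distGraph n r (r - 1)).Adj a b) :
    W.card * r.choose 2 ≤ ((n - r + 2) / 2) * n.choose (r - 2) :=
  stmt_14_general n r hr W hW
end

section
/- Let R be a commutative ring, and let X, Y, W be finite subsets of R with X ∩ W = ∅, Y ∩ W = ∅ and |X| = |Y| = h. If σ_i(X ∪ W) = σ_i(Y ∪ W) for every i with 1 ≤ i ≤ h, then σ_i(X) = σ_i(Y) for every i with 1 ≤ i ≤ h. -/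
/-- The `i`-th elementary symmetric function of the elements of a finite set `M`
in a commutative ring: the sum over all `i`-element subsets `S` of `M` of the
product of the elements of `S`. -/
def esymmSet {R : Type*} [CommRing R] (M : Finset R) (i : ℕ) : R :=
  ∑ S ∈ M.powersetCard i, ∏ t ∈ S, t

/-!
The generating series `E_M(t) = ∏_{a ∈ M} (1 + a t)` has `σ_i(M)` as its coefficient of `t^i`,
and `E_{X ∪ W} = E_X E_W` for disjoint `X`, `W`. So the hypothesis says that `E_X E_W ≡ E_Y E_W`
modulo `t^(h+1)`; as `E_W` has constant coefficient `1`, it is a unit in `R⟦t⟧` and can be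
cancelled, giving `E_X ≡ E_Y` modulo `t^(h+1)`.
-/

section

open PowerSeries

variable {R : Type*} [CommRing R]

theorem esymmSet_zero (M : Finset R) : esymmSet M 0 = 1 := by
  simp [esymmSet]

theorem PowerSeries.coeff_eq_of_coeff_mul_eq_of_isUnit {f g u : R⟦X⟧}
    (hu : IsUnit (constantCoeff u)) {n : ℕ} (h : ∀ i ≤ n, coeff i (f * u) = coeff i (g * u)) :
    ∀ i ≤ n, coeff i f = coeff i g := by
  have hdvd : X ^ (n + 1) ∣ (f - g) * u :=
    X_pow_dvd_iff.mpr fun i hi ↦ by rw [sub_mul, map_sub, h i (by omega), sub_self]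
  rw [(isUnit_iff_constantCoeff.mpr hu).dvd_mul_right, X_pow_dvd_iff] at hdvd
  exact fun i hi ↦ sub_eq_zero.mp <| by simpa only [map_sub] using hdvd i (by omega)

noncomputable def esymmSeries (M : Finset R) : R⟦X⟧ :=
  ∏ a ∈ M, (1 + C a * X)

theorem coeff_esymmSeries (M : Finset R) (i : ℕ) : coeff i (esymmSeries M) = esymmSet M i := by
  rw [esymmSeries, Finset.prod_one_add, map_sum, esymmSet, Finset.powersetCard_eq_filter,
    Finset.sum_filter]
  refine Finset.sum_congr rfl fun S _ ↦ ?_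
  rw [Finset.prod_mul_distrib, Finset.prod_const, ← map_prod, coeff_C_mul_X_pow]
  simp only [eq_comm]

theorem constantCoeff_esymmSeries (M : Finset R) : constantCoeff (esymmSeries M) = 1 := by
  simp [esymmSeries, map_prod]

theorem esymmSeries_union [DecidableEq R] {M N : Finset R} (h : Disjoint M N) :
    esymmSeries (M ∪ N) = esymmSeries M * esymmSeries N :=
  Finset.prod_union h

end

theorem stmt_16_general {R : Type*} [CommRing R] [DecidableEq R] (h : ℕ) (X Y W : Finset R)
    (hXW : X ∩ W = ∅) (hYW : Y ∩ W = ∅)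
    (hsym : ∀ i, 1 ≤ i → i ≤ h → esymmSet (X ∪ W) i = esymmSet (Y ∪ W) i) :
    ∀ i, 1 ≤ i → i ≤ h → esymmSet X i = esymmSet Y i := by
  have hunion : ∀ i ≤ h, PowerSeries.coeff i (esymmSeries X * esymmSeries W) =
      PowerSeries.coeff i (esymmSeries Y * esymmSeries W) := by
    intro i hi
    rw [← esymmSeries_union (Finset.disjoint_iff_inter_eq_empty.mpr hXW),
      ← esymmSeries_union (Finset.disjoint_iff_inter_eq_empty.mpr hYW),
      coeff_esymmSeries, coeff_esymmSeries]
    rcases i.eq_zero_or_pos with rfl | hpos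
    · rw [esymmSet_zero, esymmSet_zero]
    · exact hsym i hpos hi
  have hunit : IsUnit (PowerSeries.constantCoeff (esymmSeries W)) := by
    rw [constantCoeff_esymmSeries]; exact isUnit_one
  intro i _ hi
  simpa only [coeff_esymmSeries] using
    PowerSeries.coeff_eq_of_coeff_mul_eq_of_isUnit hunit hunion i hi

theorem stmt_16 {R : Type*} [CommRing R] [DecidableEq R] (h : ℕ) (X Y W : Finset R)
    (hXW : X ∩ W = ∅) (hYW : Y ∩ W = ∅)
    (hX : X.card = h) (hY : Y.card = h)
    (hsym : ∀ i, 1 ≤ i → i ≤ h → esymmSet (X ∪ W) i = esymmSet (Y ∪ W) i) :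
    ∀ i, 1 ≤ i → i ≤ h → esymmSet X i = esymmSet Y i :=
  stmt_16_general h X Y W hXW hYW hsym
end

section
/- Let n ≥ r > s ≥ 0 be integers, set h = r − s, and let m ≥ 2 be an integer. Suppose there exists a function a : {0, 1, …, n−1} → Z_m such that any two distinct h-element subsets S, T of {0, 1, …, n−1} have distinct sums, i.e., Σ_{i∈S} a(i) = Σ_{i∈T} a(i) implies S = T. Then the chromatic number of G(n, r, s) satisfies χ(G(n, r, s)) ≤ m. -/
open Finset

theorem eq_of_sdiff_eq_sdiff_comm {α : Type*} [GeneralizedBooleanAlgebra α] {x y : α}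
    (h : x \ y = y \ x) : x = y := by
  have hbot : y \ x = ⊥ := disjoint_self.mp (h ▸ disjoint_sdiff_sdiff (x := x) (y := y))
  rw [← symmDiff_eq_bot, symmDiff, h, hbot, sup_bot_eq]

namespace distGraph

variable {n r s : ℕ} {M : Type*} [AddCancelCommMonoid M]

theorem card_sdiff_of_adj {A B : {A : Finset (Fin n) // A.card = r}}
    (hAB : (distGraph n r s).Adj A B) : #(A.1 \ B.1) = r - s := by
  rw [card_sdiff, inter_comm, A.2, hAB.2]

theorem sum_ne_of_adj (a : Fin n → M)
    (ha : ∀ S T : Finset (Fin n), #S = r - s → #T = r - s →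
      (∑ i ∈ S, a i) = (∑ i ∈ T, a i) → S = T)
    {A B : {A : Finset (Fin n) // A.card = r}} (hAB : (distGraph n r s).Adj A B) :
    ∑ i ∈ A.1, a i ≠ ∑ i ∈ B.1, a i := by
  intro hsum
  have hdiff := ha _ _ (card_sdiff_of_adj hAB) (card_sdiff_of_adj hAB.symm)
    (sum_sdiff_eq_sum_sdiff_iff.mpr hsum)
  exact hAB.1 (Subtype.ext (eq_of_sdiff_eq_sdiff_comm hdiff))

def sumColoring (a : Fin n → M)
    (ha : ∀ S T : Finset (Fin n), #S = r - s → #T = r - s →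
      (∑ i ∈ S, a i) = (∑ i ∈ T, a i) → S = T) : (distGraph n r s).Coloring M :=
  SimpleGraph.Coloring.mk (fun A => ∑ i ∈ A.1, a i) (sum_ne_of_adj a ha)

end distGraph

theorem stmt_17_general (n r s m : ℕ) (hm : 2 ≤ m)
    (a : Fin n → ZMod m)
    (ha : ∀ S T : Finset (Fin n), S.card = r - s → T.card = r - s →
      (∑ i ∈ S, a i) = (∑ i ∈ T, a i) → S = T) :
    (distGraph n r s).chromaticNumber ≤ (m : ℕ∞) := by
  have : NeZero m := ⟨by omega⟩
  simpa [ZMod.card] using (distGraph.sumColoring a ha).colorable.chromaticNumber_le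

theorem stmt_17 (n r s m : ℕ) (hs : s < r) (hr : r ≤ n) (hm : 2 ≤ m)
    (a : Fin n → ZMod m)
    (ha : ∀ S T : Finset (Fin n), S.card = r - s → T.card = r - s →
      (∑ i ∈ S, a i) = (∑ i ∈ T, a i) → S = T) :
    (distGraph n r s).chromaticNumber ≤ (m : ℕ∞) :=
  stmt_17_general n r s m hm a ha
end

section
/- Let p > 3 be a prime such that for every natural number r the congruence 2^r ≡ −1 (mod p) fails. Then χ(G(p + 1, 3, 2)) = p, i.e., for n = p + 1 the chromatic number of G(n, 3, 2) equals exactly n − 1. -/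
open Finset

theorem Function.Involutive.exists_bool_apply_eq_not {α : Type*} {σ : α → α}
    (hσ : Function.Involutive σ) (hfix : ∀ x, σ x ≠ x) :
    ∃ φ : α → Bool, ∀ x, φ (σ x) = !φ x := by
  classical
  -- a well-ordering decides which point of each orbit `{x, σ x}` gets `true`
  refine ⟨fun x => decide (WellOrderingRel x (σ x)), fun x => ?_⟩
  simp only [hσ x]
  rcases trichotomous_of WellOrderingRel x (σ x) with h | h | h
  · simp [h, asymm h]
  · exact absurd h.symm (hfix x)
  · simp [h, asymm h]

theorem exists_bool_mul_eq_not_of_notMem_zpowers {G : Type*} [CommGroup G] {a b : G}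
    (hb : b * b = 1) (hab : b ∉ Subgroup.zpowers a) :
    ∃ ψ : G → Bool, (∀ x, ψ (b * x) = !ψ x) ∧ ∀ x, ψ (a * x) = ψ x := by
  let q : G →* G ⧸ Subgroup.zpowers a := QuotientGroup.mk' _
  have hσ : Function.Involutive (q b * ·) := fun y => by
    dsimp only
    rw [← mul_assoc, ← map_mul, hb, map_one, one_mul]
  obtain ⟨φ, hφ⟩ := hσ.exists_bool_apply_eq_not fun y hy =>
    hab ((QuotientGroup.eq_one_iff b).1 (mul_eq_right.1 hy))
  have hqa : q a = 1 := (QuotientGroup.eq_one_iff a).2 (Subgroup.mem_zpowers a)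
  exact ⟨φ ∘ q, fun x => by simp [hφ], fun x => by simp [hqa]⟩

theorem exists_bool_neg_eq_not_of_two_pow_ne_neg_one {F : Type*} [Field F] [Finite F]
    (h2 : ∀ r : ℕ, (2 : F) ^ r ≠ -1) :
    ∃ φ : F → Bool, (∀ x ≠ 0, φ (-x) = !φ x) ∧ ∀ x ≠ 0, φ (2 • x) = φ x := by
  classical
  have h20 : (2 : F) ≠ 0 := fun h =>
    h2 0 (by rw [pow_zero]; exact eq_neg_of_add_eq_zero_left (by rw [one_add_one_eq_two, h]))
  have hnot : (-1 : Fˣ) ∉ Subgroup.zpowers (Units.mk0 2 h20) := fun h => by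
    obtain ⟨r, hr⟩ := (isOfFinOrder_of_finite _).mem_powers_iff_mem_zpowers.2 h
    exact h2 r (by simpa using congrArg Units.val hr)
  obtain ⟨ψ, hneg, htwo⟩ := exists_bool_mul_eq_not_of_notMem_zpowers (by simp) hnot
  refine ⟨fun x => if hx : x = 0 then false else ψ (Units.mk0 x hx), fun x hx => ?_,
    fun x hx => ?_⟩
  · dsimp only
    rw [dif_neg (neg_ne_zero.2 hx), dif_neg hx, ← hneg]
    congr 1
    ext
    simp
  · dsimp only
    rw [two_nsmul, ← two_mul, dif_neg (mul_ne_zero h20 hx), dif_neg hx, ← htwo (Units.mk0 x hx)]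
    congr 1
    ext
    simp

theorem Finset.sum_id_ne_of_card_sdiff_eq_one {G : Type*} [AddCommGroup G] [DecidableEq G]
    {S T : Finset G} (hS : #(S \ T) = 1) (hT : #(T \ S) = 1) :
    ∑ x ∈ S, x ≠ ∑ x ∈ T, x := by
  obtain ⟨x, hx⟩ := card_eq_one.1 hS
  obtain ⟨y, hy⟩ := card_eq_one.1 hT
  have hxy : x ≠ y := by
    rintro rfl
    exact (mem_sdiff.1 (hx ▸ mem_singleton_self x)).2
      (mem_sdiff.1 (hy ▸ mem_singleton_self x)).1
  rwa [← sub_ne_zero, ← sum_sdiff_sub_sum_sdiff, hx, hy, sum_singleton, sum_singleton,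
    sub_ne_zero]

namespace TripleColoring

variable {G : Type*} [AddCommGroup G] [DecidableEq G] {φ : G → Bool}

-- the filter selects exactly one element of a pair (`winner_pair`), so no choice is needed
def winner (φ : G → Bool) (S : Finset G) : G :=
  ∑ x ∈ S with ∀ y ∈ S, y ≠ x → φ (y - x), x

-- `none` is the point at infinity
def color (φ : G → Bool) (A : Finset (Option G)) : G :=
  ∑ x ∈ eraseNone A, x + if none ∈ A then winner φ (eraseNone A) else 0

theorem eq_zero_of_add_self_eq_zero (hneg : ∀ x ≠ 0, φ (-x) = !φ x) {x : G} (hx : x + x = 0) :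
    x = 0 := by
  by_contra h
  have := hneg x h
  rw [neg_eq_of_add_eq_zero_right hx] at this
  exact Bool.eq_not_self _ |>.1 this

theorem winner_pair (hneg : ∀ x ≠ 0, φ (-x) = !φ x) {u v : G} (huv : u ≠ v) :
    winner φ {u, v} = if φ (v - u) then u else v := by
  have hvu : φ (u - v) = !φ (v - u) := by
    rw [← neg_sub, hneg _ (sub_ne_zero.2 huv.symm)]
  by_cases h : φ (v - u) <;>
    simp [winner, filter_insert, filter_singleton, huv, huv.symm, hvu, h]

theorem winner_mem_of_card_eq_two (hneg : ∀ x ≠ 0, φ (-x) = !φ x)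
    {S : Finset G} (hS : #S = 2) : winner φ S ∈ S := by
  obtain ⟨u, v, huv, rfl⟩ := card_eq_two.1 hS
  rw [winner_pair hneg huv]
  split_ifs <;> simp

theorem add_winner_injOn (hneg : ∀ x ≠ 0, φ (-x) = !φ x)
    (htwo : ∀ x ≠ 0, φ (2 • x) = φ x) (c : G) :
    Set.InjOn (fun u => u + winner φ {u, c}) {c}ᶜ := by
  intro u hu v hv huv
  simp only [Set.mem_compl_singleton_iff] at hu hv
  simp only [winner_pair hneg hu, winner_pair hneg hv] at huv
  have hcu : c - u ≠ 0 := sub_ne_zero.2 (Ne.symm hu)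
  have hcv : c - v ≠ 0 := sub_ne_zero.2 (Ne.symm hv)
  split_ifs at huv with h₁ h₂ h₂
  · exact sub_eq_zero.1 <|
      eq_zero_of_add_self_eq_zero hneg (by rw [sub_add_sub_comm, huv, sub_self])
  · obtain rfl : v = u + u - c := eq_sub_of_add_eq huv.symm
    have : c - (u + u - c) = 2 • (c - u) := by abel
    rw [this, htwo _ hcu, h₁] at h₂
    exact (h₂ rfl).elim
  · obtain rfl : u = v + v - c := eq_sub_of_add_eq huv
    have : c - (v + v - c) = 2 • (c - v) := by abel
    rw [this, htwo _ hcv, h₂] at h₁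
    exact (h₁ rfl).elim
  · exact add_right_cancel huv

theorem sum_add_winner_ne (hneg : ∀ x ≠ 0, φ (-x) = !φ x)
    (htwo : ∀ x ≠ 0, φ (2 • x) = φ x) {S T : Finset G} (hS : #S = 2)
    (hT : #T = 2) (hST : #(S ∩ T) = 1) :
    ∑ x ∈ S, x + winner φ S ≠ ∑ x ∈ T, x + winner φ T := by
  obtain ⟨c, hc⟩ := card_eq_one.1 hST
  obtain ⟨u, hu⟩ := card_eq_one.1 (show #(S \ T) = 1 by rw [card_sdiff, inter_comm, hST, hS])
  obtain ⟨v, hv⟩ := card_eq_one.1 (show #(T \ S) = 1 by rw [card_sdiff, hST, hT])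
  have huT : u ∉ T := (mem_sdiff.1 (hu ▸ mem_singleton_self u)).2
  have hvT : v ∈ T := (mem_sdiff.1 (hv ▸ mem_singleton_self v)).1
  have hvS : v ∉ S := (mem_sdiff.1 (hv ▸ mem_singleton_self v)).2
  have hcS : c ∈ S := (mem_inter.1 (hc ▸ mem_singleton_self c)).1
  have hcT : c ∈ T := (mem_inter.1 (hc ▸ mem_singleton_self c)).2
  have huc : u ≠ c := fun h => huT (h ▸ hcT)
  have hvc : v ≠ c := fun h => hvS (h ▸ hcS)
  have eS : S = {u, c} := by rw [← sdiff_union_inter S T, hu, hc, insert_eq]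
  have eT : T = {v, c} := by rw [← sdiff_union_inter T S, hv, inter_comm, hc, insert_eq]
  rw [eS, eT, sum_pair huc, sum_pair hvc, add_right_comm, add_right_comm v]
  intro h
  exact huT (add_winner_injOn hneg htwo c huc hvc (add_right_cancel h) ▸ hvT)

theorem sum_add_winner_ne_sum (hneg : ∀ x ≠ 0, φ (-x) = !φ x)
    {S T : Finset G} (hS : #S = 2) (hST : S ⊆ T) (hT : #T = 3) :
    ∑ x ∈ S, x + winner φ S ≠ ∑ x ∈ T, x := by
  obtain ⟨v, hv⟩ := card_eq_one.1 (show #(T \ S) = 1 by rw [card_sdiff_of_subset hST, hT, hS])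
  rw [← sum_sdiff hST, hv, sum_singleton, add_comm v]
  intro h
  have hvS : v ∉ S := (mem_sdiff.1 (hv ▸ mem_singleton_self v)).2
  exact hvS (add_left_cancel h ▸ winner_mem_of_card_eq_two hneg hS)

theorem color_ne (hneg : ∀ x ≠ 0, φ (-x) = !φ x)
    (htwo : ∀ x ≠ 0, φ (2 • x) = φ x) {A B : Finset (Option G)} (hA : #A = 3)
    (hB : #B = 3) (hAB : #(A ∩ B) = 2) : color φ A ≠ color φ B := by
  have hcard (C : Finset (Option G)) : #(eraseNone C) = #C - if none ∈ C then 1 else 0 := by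
    split_ifs with h
    exacts [card_eraseNone_of_mem h, card_eraseNone_of_not_mem h]
  have hS := hcard A
  have hT := hcard B
  have hST := hcard (A ∩ B)
  unfold color
  rw [eraseNone_inter] at hST
  set S := eraseNone A
  set T := eraseNone B
  by_cases ha : none ∈ A <;> by_cases hb : none ∈ B <;>
    simp only [ha, hb, mem_inter, and_self, and_true, and_false, if_true, if_false, hA, hB, hAB,
      add_zero] at hS hT hST ⊢
  · exact sum_add_winner_ne hneg htwo hS hT hST
  · have hsub := inter_eq_left.1 (eq_of_subset_of_card_le (inter_subset_left : S ∩ T ⊆ S)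
      (by omega))
    exact sum_add_winner_ne_sum hneg hS hsub hT
  · rw [inter_comm] at hST
    have hsub := inter_eq_left.1 (eq_of_subset_of_card_le (inter_subset_left : T ∩ S ⊆ T)
      (by omega))
    exact (sum_add_winner_ne_sum hneg hT hsub hS).symm
  · exact sum_id_ne_of_card_sdiff_eq_one (by rw [card_sdiff, inter_comm, hST, hS])
      (by rw [card_sdiff, hST, hT])

end TripleColoring

namespace distGraph

variable {n : ℕ}

theorem colorable_of_equiv_option {G : Type*} [AddCommGroup G] [Fintype G]
    [DecidableEq G] (e : Fin n ≃ Option G) {φ : G → Bool} (hneg : ∀ x ≠ 0, φ (-x) = !φ x)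
    (htwo : ∀ x ≠ 0, φ (2 • x) = φ x) : (distGraph n 3 2).Colorable (Fintype.card G) :=
  (SimpleGraph.Coloring.mk (fun A => TripleColoring.color φ (A.1.map e.toEmbedding))
    fun {A B} hAB => TripleColoring.color_ne hneg htwo (by simp [A.2]) (by simp [B.2])
      (by rw [← map_inter, card_map, hAB.2])).colorable

theorem disjoint_erase_of_not_adj {A B : {A : Finset (Fin n) // #A = 3}} (hAB : A ≠ B)
    (hadj : ¬(distGraph n 3 2).Adj A B) {x : Fin n} (hxA : x ∈ A.1) (hxB : x ∈ B.1) :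
    Disjoint (A.1.erase x) (B.1.erase x) := by
  refine disjoint_left.2 fun z hzA hzB => hAB ?_
  have h2 : 2 ≤ #(A.1 ∩ B.1) := by
    rw [← card_pair (ne_of_mem_erase hzA).symm]
    exact card_le_card (insert_subset (mem_inter.2 ⟨hxA, hxB⟩)
      (singleton_subset_iff.2 (mem_inter.2 ⟨mem_of_mem_erase hzA, mem_of_mem_erase hzB⟩)))
  have hle : #(A.1 ∩ B.1) ≤ 3 := (card_le_card inter_subset_left).trans A.2.le
  have hne : #(A.1 ∩ B.1) ≠ 2 := fun h => hadj ⟨hAB, h⟩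
  have h3 : #(A.1 ∩ B.1) = 3 := by omega
  exact Subtype.ext <| (eq_of_subset_of_card_le inter_subset_left (by rw [h3, A.2])).symm.trans
    (eq_of_subset_of_card_le inter_subset_right (by rw [h3, B.2]))

theorem two_mul_card_le_of_isIndepSet {𝒜 : Finset {A : Finset (Fin n) // #A = 3}}
    (h𝒜 : (distGraph n 3 2).IsIndepSet 𝒜) {x : Fin n} (hx : ∀ A ∈ 𝒜, x ∈ A.1) :
    2 * #𝒜 ≤ n - 1 := by
  have hdisj : (𝒜 : Set {A : Finset (Fin n) // #A = 3}).PairwiseDisjoint (·.1.erase x) :=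
    fun A hA B hB hAB => disjoint_erase_of_not_adj hAB (h𝒜 hA hB hAB) (hx A hA) (hx B hB)
  calc 2 * #𝒜 = #(𝒜.biUnion fun A => A.1.erase x) := by
        rw [card_biUnion hdisj, sum_const_nat fun A hA => by rw [card_erase_of_mem (hx A hA), A.2],
          mul_comm]
    _ ≤ #(univ.erase x) :=
        card_le_card (biUnion_subset.2 fun A _ => erase_subset_erase x (subset_univ _))
    _ = n - 1 := by simp

theorem choose_two_le_card_mem (x : Fin n) :
    (n - 1).choose 2 ≤ #{A : {A : Finset (Fin n) // #A = 3} | x ∈ A.1} := by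
  have hsurj : Set.SurjOn (fun A : {A : Finset (Fin n) // #A = 3} => A.1.erase x)
      ({A | x ∈ A.1} : Finset {A : Finset (Fin n) // #A = 3})
      (powersetCard 2 (univ.erase x)) := by
    intro S hS
    obtain ⟨hSx, hS2⟩ := mem_powersetCard.1 hS
    have hxS : x ∉ S := fun h => by simpa using hSx h
    exact ⟨⟨insert x S, by rw [card_insert_of_notMem hxS, hS2]⟩, by simp,
      erase_insert hxS⟩
  simpa using card_le_card_of_surjOn _ hsurj

theorem le_of_colorable {m k : ℕ} (hm : Odd m) (hm1 : 1 < m)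
    (hk : (distGraph (m + 1) 3 2).Colorable k) : m ≤ k := by
  obtain ⟨C⟩ := hk
  have hclass (c : Fin k) : 2 * #{A | 0 ∈ A.1 ∧ C A = c} ≤ m - 1 := by
    have h := two_mul_card_le_of_isIndepSet (𝒜 := {A | 0 ∈ A.1 ∧ C A = c})
      (fun A hA B hB _ hadj => C.valid hadj (by simp_all)) (x := 0) (by simp_all)
    obtain ⟨j, rfl⟩ := hm
    omega
  have key : m * (m - 1) ≤ k * (m - 1) := calc
    m * (m - 1) = 2 * m.choose 2 := by
      rw [Nat.choose_two_right, Nat.mul_div_cancel' (Nat.even_mul_pred_self m).two_dvd]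
    _ ≤ 2 * #{A : {A : Finset (Fin (m + 1)) // #A = 3} | 0 ∈ A.1} := by
      simpa using Nat.mul_le_mul_left 2 (choose_two_le_card_mem (n := m + 1) 0)
    _ = ∑ c, 2 * #{A | 0 ∈ A.1 ∧ C A = c} := by
      rw [← mul_sum, card_eq_sum_card_fiberwise (f := C) (t := univ) fun _ _ => mem_univ _]
      simp [filter_filter]
    _ ≤ ∑ _c : Fin k, (m - 1) := sum_le_sum fun c _ => hclass c
    _ = k * (m - 1) := by simp
  exact Nat.le_of_mul_le_mul_right key (by omega)

end distGraph

theorem stmt_18_general (p : ℕ) (hp : p.Prime)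
    (h2 : ∀ r : ℕ, (2 : ZMod p) ^ r ≠ -1) :
    (distGraph (p + 1) 3 2).chromaticNumber = (p : ℕ∞) := by
  have : Fact p.Prime := ⟨hp⟩
  have hp2 : p ≠ 2 := by
    rintro rfl
    exact h2 0 (by decide)
  obtain ⟨φ, hneg, htwo⟩ := exists_bool_neg_eq_not_of_two_pow_ne_neg_one h2
  refine le_antisymm ?_ (SimpleGraph.le_chromaticNumber_iff_colorable.2 fun k hk => ?_)
  · have := distGraph.colorable_of_equiv_option
      (finSuccEquivLast.trans (Equiv.optionCongr (ZMod.finEquiv p).toEquiv)) hneg htwo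
    rw [ZMod.card] at this
    exact this.chromaticNumber_le
  · exact_mod_cast distGraph.le_of_colorable (hp.odd_of_ne_two hp2) hp.one_lt hk

theorem stmt_18 (p : ℕ) (hp : p.Prime) (hp3 : 3 < p)
    (h2 : ∀ r : ℕ, (2 : ZMod p) ^ r ≠ -1) :
    (distGraph (p + 1) 3 2).chromaticNumber = (p : ℕ∞) :=
  stmt_18_general p hp h2
end
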